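/- arXiv:2507.05642 — 2 statements merged into one kernel-verified Lean document; each statement's English description precedes it below -/
import Mathlib

section
/- For every integer c with 8 ≤ c ≤ 64 and c ≠ 9, there exists a quantum Latin square of order 8 in ℋ_2⊗ℋ_2⊗ℋ_2 with cardinality exactly c. -/
noncomputable section

/-- Two vectors are identified when they differ by a global phase `e^{iθ}`. -/
def PhaseEq {E : Type*} [AddCommGroup E] [Module ℂ E] (u v : E) : Prop :=
  ∃ θ : ℝ, u = Complex.exp (θ * Complex.I) • v

/-- Concrete tensor product `u ⊗ v` of Euclidean space vectors. -/
def tens {ι κ : Type*} (u : EuclideanSpace ℂ ι) (v : EuclideanSpace ℂ κ) :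
    EuclideanSpace ℂ (ι × κ) :=
  (WithLp.equiv 2 _).symm (fun p : ι × κ => u p.1 * v p.2)

/-- An array (with arbitrary index types) all of whose rows and columns
are orthonormal families. -/
def IsQLSIdx {ι κ E : Type*} [NormedAddCommGroup E] [InnerProductSpace ℂ E]
    (M : ι → κ → E) : Prop :=
  (∀ i, Orthonormal ℂ (fun j => M i j)) ∧ (∀ j, Orthonormal ℂ (fun i => M i j))

/-- The family `f` has exactly `c` distinct members up to global phase. -/
def FamCardEq {ι E : Type*} [AddCommGroup E] [Module ℂ E] (f : ι → E) (c : ℕ) : Prop :=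
  ∃ reps : Fin c → E,
    (∀ i, ∃ k, PhaseEq (f i) (reps k)) ∧
    (∀ k, ∃ i, PhaseEq (f i) (reps k)) ∧
    (∀ k l, k ≠ l → ¬ PhaseEq (reps k) (reps l))

set_option maxRecDepth 40000
set_option maxHeartbeats 1000000

namespace QLS8

open Complex Finset

/-- primitive 8th root of unity -/
def ζ : ℂ := Complex.exp (Real.pi / 4 * Complex.I)

lemma zeta_pow_nat (a : ℕ) : ζ ^ a = Complex.exp ((a * (Real.pi / 4)) * Complex.I) := by
  rw [ζ, ← Complex.exp_nat_mul]; ring_nf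

lemma zeta_pow_8 : ζ ^ 8 = 1 := by
  rw [zeta_pow_nat]
  have : ((8 : ℕ) * ((Real.pi : ℂ) / 4)) * Complex.I = 2 * Real.pi * Complex.I := by
    push_cast; ring
  rw [this, Complex.exp_two_pi_mul_I]

lemma zeta_ne_zero : ζ ≠ 0 := Complex.exp_ne_zero _

lemma zeta_pow_mod (a : ℕ) : ζ ^ (a % 8) = ζ ^ a := by
  conv_rhs => rw [← Nat.div_add_mod a 8]
  rw [pow_add, pow_mul, zeta_pow_8, one_pow, one_mul]

lemma zeta_pow_inj {a b : ℕ} (ha : a < 8) (hb : b < 8) (h : ζ ^ a = ζ ^ b) : a = b := by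
  rw [zeta_pow_nat, zeta_pow_nat, Complex.exp_eq_exp_iff_exists_int] at h
  obtain ⟨n, hn⟩ := h
  have h2 : ((a : ℂ) - b - 8 * n) * (Real.pi * Complex.I) = 0 := by
    push_cast at hn ⊢; linear_combination 4 * hn
  have hpi : (Real.pi : ℂ) * Complex.I ≠ 0 :=
    mul_ne_zero (by simpa using Real.pi_ne_zero) Complex.I_ne_zero
  have h3 : ((a : ℂ) - b - 8 * n) = 0 := by
    rcases mul_eq_zero.mp h2 with h | h
    · exact h
    · exact absurd h hpi
  have h4 : (a : ℂ) = b + 8 * n := by linear_combination h3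
  have h5 : (a : ℤ) = b + 8 * n := by exact_mod_cast h4
  omega

lemma zeta_pow_4 : ζ ^ 4 = -1 := by
  rw [zeta_pow_nat]
  have : ((4 : ℕ) * ((Real.pi : ℂ) / 4)) * Complex.I = Real.pi * Complex.I := by push_cast; ring
  rw [this, Complex.exp_pi_mul_I]

/-- integer coordinates of `ζ^v` in the basis `1, ζ, ζ², ζ³`. -/
def czn (v : ℕ) (m : Fin 4) : ℤ :=
  (if v = m.val then 1 else 0) - (if v = m.val + 4 then 1 else 0)

def cz (k : ZMod 8) (m : Fin 4) : ℤ := czn k.val m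

lemma zeta_expand (v : ℕ) (hv : v < 8) :
    ζ ^ v = ∑ m : Fin 4, (czn v m : ℂ) * ζ ^ (m : ℕ) := by
  have h4 := zeta_pow_4
  interval_cases v
  · simp only [czn, Fin.sum_univ_four, show ((0:Fin 4):ℕ)=0 from rfl, show ((1:Fin 4):ℕ)=1 from rfl, show ((2:Fin 4):ℕ)=2 from rfl, show ((3:Fin 4):ℕ)=3 from rfl]; norm_num
  · simp only [czn, Fin.sum_univ_four, show ((0:Fin 4):ℕ)=0 from rfl, show ((1:Fin 4):ℕ)=1 from rfl, show ((2:Fin 4):ℕ)=2 from rfl, show ((3:Fin 4):ℕ)=3 from rfl]; norm_num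
  · simp only [czn, Fin.sum_univ_four, show ((0:Fin 4):ℕ)=0 from rfl, show ((1:Fin 4):ℕ)=1 from rfl, show ((2:Fin 4):ℕ)=2 from rfl, show ((3:Fin 4):ℕ)=3 from rfl]; norm_num
  · simp only [czn, Fin.sum_univ_four, show ((0:Fin 4):ℕ)=0 from rfl, show ((1:Fin 4):ℕ)=1 from rfl, show ((2:Fin 4):ℕ)=2 from rfl, show ((3:Fin 4):ℕ)=3 from rfl]; norm_num
  · simp only [czn, Fin.sum_univ_four, show ((0:Fin 4):ℕ)=0 from rfl, show ((1:Fin 4):ℕ)=1 from rfl, show ((2:Fin 4):ℕ)=2 from rfl, show ((3:Fin 4):ℕ)=3 from rfl]; norm_num; linear_combination h4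
  · simp only [czn, Fin.sum_univ_four, show ((0:Fin 4):ℕ)=0 from rfl, show ((1:Fin 4):ℕ)=1 from rfl, show ((2:Fin 4):ℕ)=2 from rfl, show ((3:Fin 4):ℕ)=3 from rfl]; norm_num; linear_combination ζ * h4
  · simp only [czn, Fin.sum_univ_four, show ((0:Fin 4):ℕ)=0 from rfl, show ((1:Fin 4):ℕ)=1 from rfl, show ((2:Fin 4):ℕ)=2 from rfl, show ((3:Fin 4):ℕ)=3 from rfl]; norm_num; linear_combination ζ ^ 2 * h4
  · simp only [czn, Fin.sum_univ_four, show ((0:Fin 4):ℕ)=0 from rfl, show ((1:Fin 4):ℕ)=1 from rfl, show ((2:Fin 4):ℕ)=2 from rfl, show ((3:Fin 4):ℕ)=3 from rfl]; norm_num; linear_combination ζ ^ 3 * h4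

/-- decidable condition implying that `∑ ζ^(d l)` vanishes -/
def Bal {n : ℕ} (d : Fin n → ZMod 8) : Prop :=
  ∀ m : Fin 4, (∑ l, cz (d l) m) = 0

instance {n : ℕ} (d : Fin n → ZMod 8) : Decidable (Bal d) := by
  unfold Bal; infer_instance

lemma sum_zeta_eq_zero {n : ℕ} {d : Fin n → ZMod 8} (h : Bal d) :
    ∑ l, ζ ^ (d l).val = 0 := by
  have : ∑ l, ζ ^ (d l).val = ∑ l, ∑ m : Fin 4, (cz (d l) m : ℂ) * ζ ^ (m : ℕ) := by
    exact Finset.sum_congr rfl fun l _ => zeta_expand (d l).val (ZMod.val_lt _)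
  rw [this, Finset.sum_comm]
  have : ∀ m : Fin 4, ∑ l, (cz (d l) m : ℂ) * ζ ^ (m : ℕ) = 0 := by
    intro m
    rw [← Finset.sum_mul]
    have : (∑ l, (cz (d l) m : ℂ)) = ((∑ l, cz (d l) m : ℤ) : ℂ) := by push_cast; ring
    rw [this, h m]; simp
  simp [this]

lemma zeta_abs : ‖ζ‖ = 1 := by
  rw [ζ, Complex.norm_exp]; simp

lemma conj_zeta_mul_self (k : ℕ) : (starRingEnd ℂ) (ζ ^ k) * ζ ^ k = 1 := by
  rw [mul_comm, Complex.mul_conj]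
  have : Complex.normSq (ζ ^ k) = 1 := by
    rw [map_pow, ← Complex.sq_norm, zeta_abs]; norm_num
  rw [this]; norm_num

lemma zpow_val_add (x y : ZMod 8) : ζ ^ (x + y).val = ζ ^ x.val * ζ ^ y.val := by
  rw [← pow_add, ← zeta_pow_mod (x.val + y.val), ZMod.val_add]

lemma conj_zeta_pow_mul (a b : ZMod 8) :
    (starRingEnd ℂ) (ζ ^ a.val) * ζ ^ b.val = ζ ^ (b - a).val := by
  have h1 : ζ ^ b.val = ζ ^ (b - a).val * ζ ^ a.val := by
    rw [← zpow_val_add, sub_add_cancel]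
  calc (starRingEnd ℂ) (ζ ^ a.val) * ζ ^ b.val
      = ζ ^ (b - a).val * ((starRingEnd ℂ) (ζ ^ a.val) * ζ ^ a.val) := by rw [h1]; ring
    _ = ζ ^ (b - a).val := by rw [conj_zeta_mul_self]; ring

/-- flat vector: all coordinates are `n^{-1/2}` times a power of `ζ`. -/
def fvec {n : ℕ} {ι : Type*} (e : ι ≃ Fin n) (f : Fin n → ZMod 8) :
    EuclideanSpace ℂ ι :=
  WithLp.toLp 2 (fun p => ((Real.sqrt n : ℝ) : ℂ)⁻¹ * ζ ^ (f (e p)).val)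

lemma inner_fvec {n : ℕ} {ι : Type*} [Fintype ι] (e : ι ≃ Fin n)
    (f g : Fin n → ZMod 8) :
    (inner ℂ (fvec e f) (fvec e g) : ℂ) = (n : ℂ)⁻¹ * ∑ l, ζ ^ ((g l - f l).val) := by
  have hc : ((starRingEnd ℂ) (((Real.sqrt n : ℝ) : ℂ)⁻¹)) = ((Real.sqrt n : ℝ) : ℂ)⁻¹ := by
    rw [map_inv₀, Complex.conj_ofReal]
  have hcc : (((Real.sqrt n : ℝ) : ℂ)⁻¹) * (((Real.sqrt n : ℝ) : ℂ)⁻¹) = (n : ℂ)⁻¹ := by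
    rw [← mul_inv, ← Complex.ofReal_mul, Real.mul_self_sqrt (by positivity),
      Complex.ofReal_natCast]
  calc (inner ℂ (fvec e f) (fvec e g) : ℂ)
      = ∑ p : ι, (starRingEnd ℂ) (fvec e f p) * fvec e g p := by
        simp [PiLp.inner_apply, fvec, RCLike.inner_apply, PiLp.toLp_apply, mul_comm]
    _ = ∑ p : ι, (n : ℂ)⁻¹ * ζ ^ ((g (e p) - f (e p)).val) := by
        refine Finset.sum_congr rfl fun p _ => ?_
        rw [fvec, fvec, PiLp.toLp_apply, PiLp.toLp_apply, map_mul, hc, mul_mul_mul_comm, hcc, conj_zeta_pow_mul]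
    _ = (n : ℂ)⁻¹ * ∑ l, ζ ^ ((g l - f l).val) := by
        rw [← Finset.mul_sum]
        congr 1
        exact Fintype.sum_equiv e _ _ (fun p => rfl)

lemma inner_fvec_self {n : ℕ} {ι : Type*} [Fintype ι] (e : ι ≃ Fin n) (hn : 0 < n)
    (f : Fin n → ZMod 8) : (inner ℂ (fvec e f) (fvec e f) : ℂ) = 1 := by
  rw [inner_fvec]
  simp only [sub_self, ZMod.val_zero, pow_zero]
  rw [Finset.sum_const, Finset.card_univ, Fintype.card_fin, nsmul_eq_mul, mul_one,
    inv_mul_cancel₀]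
  exact_mod_cast hn.ne'

lemma inner_fvec_zero {n : ℕ} {ι : Type*} [Fintype ι] (e : ι ≃ Fin n)
    (f g : Fin n → ZMod 8) (h : Bal (fun l => g l - f l)) :
    (inner ℂ (fvec e f) (fvec e g) : ℂ) = 0 := by
  rw [inner_fvec, sum_zeta_eq_zero h, mul_zero]

lemma phaseEq_fvec_iff {n : ℕ} {ι : Type*} [Fintype ι] (e : ι ≃ Fin n) (hn : 0 < n)
    (f g : Fin n → ZMod 8) :
    PhaseEq (fvec e f) (fvec e g) ↔ ∃ cc : ZMod 8, ∀ l, f l = g l + cc := by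
  constructor
  · rintro ⟨θ, hθ⟩
    have hcne : (((Real.sqrt n : ℝ) : ℂ)⁻¹) ≠ 0 := by
      simp only [ne_eq, inv_eq_zero, Complex.ofReal_eq_zero]
      positivity
    have key : ∀ l : Fin n, ζ ^ (f l).val = Complex.exp (θ * Complex.I) * ζ ^ (g l).val := by
      intro l
      have := congrArg (· (e.symm l)) hθ
      simp only [fvec, PiLp.toLp_apply, PiLp.smul_apply, smul_eq_mul, Equiv.apply_symm_apply] at this
      have h' : (((Real.sqrt n : ℝ) : ℂ)⁻¹) * ζ ^ (f l).val
          = (((Real.sqrt n : ℝ) : ℂ)⁻¹) * (Complex.exp (θ * Complex.I) * ζ ^ (g l).val) := by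
        linear_combination this
      exact mul_left_cancel₀ hcne h' 
    have key2 : ∀ l : Fin n, ζ ^ ((f l - g l).val) = Complex.exp (θ * Complex.I) := by
      intro l
      rw [← conj_zeta_pow_mul, key l]
      linear_combination Complex.exp (θ * Complex.I) * conj_zeta_mul_self (g l).val
    obtain ⟨l0⟩ := Fin.pos_iff_nonempty.mp hn
    refine ⟨f l0 - g l0, fun l => ?_⟩
    have : ζ ^ ((f l - g l).val) = ζ ^ ((f l0 - g l0).val) := by rw [key2, key2]
    have hv := zeta_pow_inj (ZMod.val_lt _) (ZMod.val_lt _) this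
    have : f l - g l = f l0 - g l0 := by
      have : ((f l - g l).val : ZMod 8) = ((f l0 - g l0).val : ZMod 8) := by rw [hv]
      rwa [ZMod.natCast_val, ZMod.natCast_val, ZMod.cast_id, ZMod.cast_id] at this
    linear_combination this
  · rintro ⟨cc, hcc⟩
    refine ⟨cc.val * (Real.pi / 4), ?_⟩
    ext p
    simp only [fvec, PiLp.toLp_apply, PiLp.smul_apply, smul_eq_mul]
    rw [hcc (e p), zpow_val_add]
    have : Complex.exp ((cc.val * (Real.pi / 4) : ℝ) * Complex.I) = ζ ^ cc.val := by
      rw [zeta_pow_nat]; push_cast; ring_nf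
    rw [this]; ring

lemma phaseEq_refl {E : Type*} [AddCommGroup E] [Module ℂ E] (u : E) : PhaseEq u u := by
  refine ⟨0, ?_⟩
  norm_num

lemma inner_tens {ι κ : Type*} [Fintype ι] [Fintype κ]
    (u v : EuclideanSpace ℂ ι) (x y : EuclideanSpace ℂ κ) :
    (inner ℂ (tens u x) (tens v y) : ℂ) = (inner ℂ u v : ℂ) * (inner ℂ x y : ℂ) := by
  simp only [PiLp.inner_apply, RCLike.inner_apply, tens, WithLp.equiv_symm_apply, PiLp.toLp_apply]
  rw [Fintype.sum_prod_type, Finset.sum_mul_sum]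
  exact Finset.sum_congr rfl fun p _ => Finset.sum_congr rfl fun q _ => by
    rw [map_mul]; ring

def E2 (m : Fin 2) : EuclideanSpace ℂ (Fin 2) := WithLp.toLp 2 (fun p => if p = m then 1 else 0)

lemma inner_E2 (m m' : Fin 2) : (inner ℂ (E2 m) (E2 m') : ℂ) = if m = m' then 1 else 0 := by
  fin_cases m <;> fin_cases m' <;> rw [PiLp.inner_apply] <;>
    simp [E2, PiLp.inner_apply, RCLike.inner_apply, Fin.sum_univ_two]

lemma phaseEq_tens_iff (m m' : Fin 2) (x y : EuclideanSpace ℂ (Fin 2 × Fin 2))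
    (hy : ∀ q, y q ≠ 0) :
    PhaseEq (tens (E2 m) x) (tens (E2 m') y) ↔ (m = m' ∧ PhaseEq x y) := by
  constructor
  · rintro ⟨θ, hθ⟩
    have hmm : m = m' := by
      by_contra hne
      have := congrArg (· (m', (0 : Fin 2), (0 : Fin 2))) hθ
      simp only [tens, WithLp.equiv_symm_apply, PiLp.toLp_apply, PiLp.smul_apply, smul_eq_mul, E2] at this
      rw [if_neg (fun h : m' = m => hne h.symm)] at this
      simp only [eq_self_iff_true, if_true, zero_mul, one_mul] at this
      exact (mul_ne_zero (Complex.exp_ne_zero _) (hy _)) this.symm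
    subst hmm
    refine ⟨rfl, θ, ?_⟩
    ext q
    have := congrArg (· (m, q)) hθ
    simp only [tens, WithLp.equiv_symm_apply, PiLp.toLp_apply, PiLp.smul_apply, smul_eq_mul, E2,
      if_pos rfl, one_mul] at this
    simpa [PiLp.smul_apply, smul_eq_mul] using this
  · rintro ⟨rfl, θ, hθ⟩
    refine ⟨θ, ?_⟩
    ext pq
    have := congrArg (· pq.2) hθ
    simp only [PiLp.smul_apply, smul_eq_mul] at this ⊢
    simp only [tens, WithLp.equiv_symm_apply, PiLp.toLp_apply, this]
    ring

def enc8 : (Fin 2 × Fin 2 × Fin 2) ≃ Fin 8 where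
  toFun p := ⟨p.1.val + 2 * p.2.1.val + 4 * p.2.2.val, by omega⟩
  invFun l := (⟨l.val % 2, by omega⟩, ⟨l.val / 2 % 2, by omega⟩, ⟨l.val / 4, by omega⟩)
  left_inv := by decide
  right_inv := by decide

def enc4 : (Fin 2 × Fin 2) ≃ Fin 4 where
  toFun p := ⟨p.1.val + 2 * p.2.val, by omega⟩
  invFun l := (⟨l.val % 2, by omega⟩, ⟨l.val / 2, by omega⟩)
  left_inv := by decide
  right_inv := by decide

/-- the equivalence relation for the full flat construction -/
def Rel8 (α β : Fin 8 → Fin 8 → ZMod 8) (p q : Fin 8 × Fin 8) : Prop :=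
  ∃ cc : ZMod 8, ∀ l, α p.1 l + β p.2 l = (α q.1 l + β q.2 l) + cc

instance (α β : Fin 8 → Fin 8 → ZMod 8) (p q : Fin 8 × Fin 8) :
    Decidable (Rel8 α β p q) := by unfold Rel8; infer_instance

theorem master1 (α β : Fin 8 → Fin 8 → ZMod 8) (c : ℕ)
    (r : Fin c → Fin 8 × Fin 8) (g : Fin 8 × Fin 8 → Fin c)
    (hα : ∀ i i' : Fin 8, i ≠ i' → Bal (fun l => α i' l - α i l))
    (hβ : ∀ j j' : Fin 8, j ≠ j' → Bal (fun l => β j' l - β j l))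
    (h1 : ∀ p, Rel8 α β p (r (g p)))
    (h3 : ∀ k k', k ≠ k' → ¬ Rel8 α β (r k) (r k')) :
    ∃ M : Fin 8 → Fin 8 → EuclideanSpace ℂ (Fin 2 × Fin 2 × Fin 2),
      IsQLSIdx M ∧ FamCardEq (fun p : Fin 8 × Fin 8 => M p.1 p.2) c := by
  set M : Fin 8 → Fin 8 → EuclideanSpace ℂ (Fin 2 × Fin 2 × Fin 2) :=
    fun i j => fvec enc8 (fun l => α i l + β j l) with hM
  have hphase : ∀ p q : Fin 8 × Fin 8,
      PhaseEq (M p.1 p.2) (M q.1 q.2) ↔ Rel8 α β p q := by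
    intro p q
    rw [hM, phaseEq_fvec_iff enc8 (by norm_num)]
    rfl
  refine ⟨M, ⟨?_, ?_⟩, ?_⟩
  · intro i
    rw [orthonormal_iff_ite]
    intro j j'
    by_cases h : j = j'
    · subst h; rw [if_pos rfl]; exact inner_fvec_self enc8 (by norm_num) _
    · rw [if_neg h]
      refine inner_fvec_zero enc8 _ _ ?_
      have := hβ j j' h
      convert this using 2 with l
      ring
  · intro j
    rw [orthonormal_iff_ite]
    intro i i'
    by_cases h : i = i'
    · subst h; rw [if_pos rfl]; exact inner_fvec_self enc8 (by norm_num) _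
    · rw [if_neg h]
      refine inner_fvec_zero enc8 _ _ ?_
      have := hα i i' h
      convert this using 2 with l
      ring
  · refine ⟨fun k => M (r k).1 (r k).2, ?_, ?_, ?_⟩
    · intro p
      exact ⟨g p, (hphase p (r (g p))).mpr (h1 p)⟩
    · intro k
      exact ⟨r k, phaseEq_refl _⟩
    · intro k k' hkk
      rw [hphase]
      exact h3 k k' hkk

def da (i : Fin 8) : Fin 2 := ⟨i.val / 4, by omega⟩
def ds (i : Fin 8) : Fin 4 := ⟨i.val % 4, by omega⟩

lemma da_ds_inj : ∀ i i' : Fin 8, da i = da i' → ds i = ds i' → i = i' := by decide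

/-- exponents of the cell `p` in the block construction -/
def bex (α β : Fin 2 → Fin 2 → Fin 4 → Fin 4 → ZMod 8) (p : Fin 8 × Fin 8)
    (l : Fin 4) : ZMod 8 :=
  α (da p.1) (da p.2) (ds p.1) l + β (da p.1) (da p.2) (ds p.2) l

/-- the equivalence relation for the block construction -/
def Rel4 (α β : Fin 2 → Fin 2 → Fin 4 → Fin 4 → ZMod 8) (p q : Fin 8 × Fin 8) : Prop :=
  (da p.1 + da p.2 = da q.1 + da q.2) ∧
    ∃ cc : ZMod 8, ∀ l, bex α β p l = bex α β q l + cc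

instance (α β : Fin 2 → Fin 2 → Fin 4 → Fin 4 → ZMod 8) (p q : Fin 8 × Fin 8) :
    Decidable (Rel4 α β p q) := by unfold Rel4; infer_instance

theorem master2 (α β : Fin 2 → Fin 2 → Fin 4 → Fin 4 → ZMod 8) (c : ℕ)
    (r : Fin c → Fin 8 × Fin 8) (g : Fin 8 × Fin 8 → Fin c)
    (hα : ∀ a b : Fin 2, ∀ s s' : Fin 4, s ≠ s' → Bal (fun l => α a b s' l - α a b s l))
    (hβ : ∀ a b : Fin 2, ∀ t t' : Fin 4, t ≠ t' → Bal (fun l => β a b t' l - β a b t l))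
    (h1 : ∀ p, Rel4 α β p (r (g p)))
    (h3 : ∀ k k', k ≠ k' → ¬ Rel4 α β (r k) (r k')) :
    ∃ M : Fin 8 → Fin 8 → EuclideanSpace ℂ (Fin 2 × Fin 2 × Fin 2),
      IsQLSIdx M ∧ FamCardEq (fun p : Fin 8 × Fin 8 => M p.1 p.2) c := by
  set M : Fin 8 → Fin 8 → EuclideanSpace ℂ (Fin 2 × Fin 2 × Fin 2) :=
    fun i j => tens (E2 (da i + da j)) (fvec enc4 (bex α β (i, j))) with hM
  have hnz : ∀ (f : Fin 4 → ZMod 8) (q : Fin 2 × Fin 2), fvec enc4 f q ≠ 0 := by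
    intro f q
    refine mul_ne_zero ?_ (pow_ne_zero _ zeta_ne_zero)
    simp only [ne_eq, inv_eq_zero, Complex.ofReal_eq_zero]
    positivity
  have hphase : ∀ p q : Fin 8 × Fin 8,
      PhaseEq (M p.1 p.2) (M q.1 q.2) ↔ Rel4 α β p q := by
    intro p q
    rw [hM]
    simp only
    rw [phaseEq_tens_iff _ _ _ _ (hnz _), phaseEq_fvec_iff enc4 (by norm_num)]
    rfl
  have hinner : ∀ i j i' j' : Fin 8,
      (inner ℂ (M i j) (M i' j') : ℂ) =
        (if da i + da j = da i' + da j' then 1 else 0) *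
          (inner ℂ (fvec enc4 (bex α β (i, j))) (fvec enc4 (bex α β (i', j'))) : ℂ) := by
    intro i j i' j'
    rw [hM]
    simp only
    rw [inner_tens, inner_E2]
  refine ⟨M, ⟨?_, ?_⟩, ?_⟩
  · intro i
    rw [orthonormal_iff_ite]
    intro j j'
    rw [hinner]
    by_cases h : j = j'
    · subst h
      rw [if_pos rfl, if_pos rfl, inner_fvec_self enc4 (by norm_num), one_mul]
    · rw [if_neg h]
      by_cases hb : da j = da j'
      · have hds : ds j ≠ ds j' := fun hd => h (da_ds_inj _ _ hb hd)
        rw [inner_fvec_zero enc4 _ _ ?_, mul_zero]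
        have := hβ (da i) (da j) (ds j) (ds j') hds
        convert this using 2 with l
        simp only [bex, hb]
        ring
      · rw [if_neg (fun hc => hb (by
          have := add_left_cancel hc
          exact this)), zero_mul]
  · intro j
    rw [orthonormal_iff_ite]
    intro i i'
    rw [hinner]
    by_cases h : i = i'
    · subst h
      rw [if_pos rfl, if_pos rfl, inner_fvec_self enc4 (by norm_num), one_mul]
    · rw [if_neg h]
      by_cases hb : da i = da i'
      · have hds : ds i ≠ ds i' := fun hd => h (da_ds_inj _ _ hb hd)
        rw [inner_fvec_zero enc4 _ _ ?_, mul_zero]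
        have := hα (da i) (da j) (ds i) (ds i') hds
        convert this using 2 with l
        simp only [bex, hb]
        ring
      · rw [if_neg (fun hc => hb (add_right_cancel hc)), zero_mul]
  · refine ⟨fun k => M (r k).1 (r k).2, ?_, ?_, ?_⟩
    · intro p
      exact ⟨g p, (hphase p (r (g p))).mpr (h1 p)⟩
    · intro k
      exact ⟨r k, phaseEq_refl _⟩
    · intro k k' hkk
      rw [hphase]
      exact h3 k k' hkk

/-- natural-number digit encoding of a `Fin 8 → ZMod 8` key -/
def encKey (f : Fin 8 → ZMod 8) : ℕ := ∑ l : Fin 8, (f l).val * 8 ^ (l : ℕ)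

lemma encKey_inj {f g : Fin 8 → ZMod 8} (h : encKey f = encKey g) : f = g := by
  unfold encKey at h
  rw [Fin.sum_univ_eight, Fin.sum_univ_eight] at h
  simp only [show ((0:Fin 8):ℕ) = 0 from rfl, show ((1:Fin 8):ℕ) = 1 from rfl,
    show ((2:Fin 8):ℕ) = 2 from rfl, show ((3:Fin 8):ℕ) = 3 from rfl,
    show ((4:Fin 8):ℕ) = 4 from rfl, show ((5:Fin 8):ℕ) = 5 from rfl,
    show ((6:Fin 8):ℕ) = 6 from rfl, show ((7:Fin 8):ℕ) = 7 from rfl] at h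
  norm_num at h
  have c0 := ZMod.val_lt (f 0); have c1 := ZMod.val_lt (f 1)
  have c2 := ZMod.val_lt (f 2); have c3 := ZMod.val_lt (f 3)
  have c4 := ZMod.val_lt (f 4); have c5 := ZMod.val_lt (f 5)
  have c6 := ZMod.val_lt (f 6); have c7 := ZMod.val_lt (f 7)
  have d0 := ZMod.val_lt (g 0); have d1 := ZMod.val_lt (g 1)
  have d2 := ZMod.val_lt (g 2); have d3 := ZMod.val_lt (g 3)
  have d4 := ZMod.val_lt (g 4); have d5 := ZMod.val_lt (g 5)
  have d6 := ZMod.val_lt (g 6); have d7 := ZMod.val_lt (g 7)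
  have eqv : ∀ (a b : ZMod 8), a.val = b.val → a = b := by
    intro a b hab
    calc a = ((a.val : ℕ) : ZMod 8) := by rw [ZMod.natCast_val, ZMod.cast_id]
      _ = ((b.val : ℕ) : ZMod 8) := by rw [hab]
      _ = b := by rw [ZMod.natCast_val, ZMod.cast_id]
  funext l
  fin_cases l
  · show f 0 = g 0; exact eqv _ _ (by omega)
  · show f 1 = g 1; exact eqv _ _ (by omega)
  · show f 2 = g 2; exact eqv _ _ (by omega)
  · show f 3 = g 3; exact eqv _ _ (by omega)
  · show f 4 = g 4; exact eqv _ _ (by omega)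
  · show f 5 = g 5; exact eqv _ _ (by omega)
  · show f 6 = g 6; exact eqv _ _ (by omega)
  · show f 7 = g 7; exact eqv _ _ (by omega)

/-- normalized key of a cell in the full flat construction -/
def keyfun (α β : Fin 8 → Fin 8 → ZMod 8) (p : Fin 8 × Fin 8) (l : Fin 8) : ZMod 8 :=
  (α p.1 l + β p.2 l) - (α p.1 0 + β p.2 0)

def keyN (α β : Fin 8 → Fin 8 → ZMod 8) (p : Fin 8 × Fin 8) : ℕ :=
  encKey (keyfun α β p)

lemma rel8_iff_keyN (α β : Fin 8 → Fin 8 → ZMod 8) (p q : Fin 8 × Fin 8) :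
    Rel8 α β p q ↔ keyN α β p = keyN α β q := by
  constructor
  · rintro ⟨cc, hcc⟩
    unfold keyN
    congr 1
    funext l
    unfold keyfun
    rw [hcc l, hcc 0]
    ring
  · intro h
    have h' := encKey_inj h
    refine ⟨(α p.1 0 + β p.2 0) - (α q.1 0 + β q.2 0), fun l => ?_⟩
    have := congrFun h' l
    unfold keyfun at this
    linear_combination this

theorem master1' (α β : Fin 8 → Fin 8 → ZMod 8) (c : ℕ)
    (r : Fin c → Fin 8 × Fin 8) (g : Fin 8 × Fin 8 → Fin c) (keyL : List ℕ)
    (hα : ∀ i i' : Fin 8, i ≠ i' → Bal (fun l => α i' l - α i l))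
    (hβ : ∀ j j' : Fin 8, j ≠ j' → Bal (fun l => β j' l - β j l))
    (hlen : keyL.length = c)
    (h1 : ∀ p : Fin 8 × Fin 8, keyN α β p = keyL.get ⟨(g p).val, by rw [hlen]; exact (g p).isLt⟩)
    (h2 : ∀ k : Fin c, g (r k) = k)
    (hnd : keyL.Nodup) :
    ∃ M : Fin 8 → Fin 8 → EuclideanSpace ℂ (Fin 2 × Fin 2 × Fin 2),
      IsQLSIdx M ∧ FamCardEq (fun p : Fin 8 × Fin 8 => M p.1 p.2) c := by
  have hkey : ∀ k : Fin c, keyN α β (r k) = keyL.get ⟨k.val, by rw [hlen]; exact k.isLt⟩ := by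
    intro k
    have := h1 (r k)
    rwa [h2 k] at this
  refine master1 α β c r g hα hβ ?_ ?_
  · intro p
    rw [rel8_iff_keyN]
    rw [h1 p, hkey (g p)]
  · intro k k' hkk
    rw [rel8_iff_keyN, hkey k, hkey k']
    intro hh
    have h2 := List.nodup_iff_injective_get.mp hnd hh
    have h3 : k.val = k'.val := by
      have := congrArg Fin.val h2
      simpa using this
    exact hkk (Fin.ext h3)

def encKey4 (f : Fin 4 → ZMod 8) : ℕ := ∑ l : Fin 4, (f l).val * 8 ^ (l : ℕ)

lemma encKey4_lt (f : Fin 4 → ZMod 8) : encKey4 f < 4096 := by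
  unfold encKey4
  rw [Fin.sum_univ_four]
  have c0 := ZMod.val_lt (f 0); have c1 := ZMod.val_lt (f 1)
  have c2 := ZMod.val_lt (f 2); have c3 := ZMod.val_lt (f 3)
  simp only [show ((0:Fin 4):ℕ) = 0 from rfl, show ((1:Fin 4):ℕ) = 1 from rfl,
    show ((2:Fin 4):ℕ) = 2 from rfl, show ((3:Fin 4):ℕ) = 3 from rfl]
  norm_num
  omega

lemma encKey4_inj {f g : Fin 4 → ZMod 8} (h : encKey4 f = encKey4 g) : f = g := by
  unfold encKey4 at h
  rw [Fin.sum_univ_four, Fin.sum_univ_four] at h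
  simp only [show ((0:Fin 4):ℕ) = 0 from rfl, show ((1:Fin 4):ℕ) = 1 from rfl,
    show ((2:Fin 4):ℕ) = 2 from rfl, show ((3:Fin 4):ℕ) = 3 from rfl] at h
  norm_num at h
  have c0 := ZMod.val_lt (f 0); have c1 := ZMod.val_lt (f 1)
  have c2 := ZMod.val_lt (f 2); have c3 := ZMod.val_lt (f 3)
  have d0 := ZMod.val_lt (g 0); have d1 := ZMod.val_lt (g 1)
  have d2 := ZMod.val_lt (g 2); have d3 := ZMod.val_lt (g 3)
  have eqv : ∀ (a b : ZMod 8), a.val = b.val → a = b := by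
    intro a b hab
    calc a = ((a.val : ℕ) : ZMod 8) := by rw [ZMod.natCast_val, ZMod.cast_id]
      _ = ((b.val : ℕ) : ZMod 8) := by rw [hab]
      _ = b := by rw [ZMod.natCast_val, ZMod.cast_id]
  funext l
  fin_cases l
  · show f 0 = g 0; exact eqv _ _ (by omega)
  · show f 1 = g 1; exact eqv _ _ (by omega)
  · show f 2 = g 2; exact eqv _ _ (by omega)
  · show f 3 = g 3; exact eqv _ _ (by omega)

def key4fun (α β : Fin 2 → Fin 2 → Fin 4 → Fin 4 → ZMod 8) (p : Fin 8 × Fin 8)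
    (l : Fin 4) : ZMod 8 :=
  bex α β p l - bex α β p 0

def keyN4 (α β : Fin 2 → Fin 2 → Fin 4 → Fin 4 → ZMod 8) (p : Fin 8 × Fin 8) : ℕ :=
  (da p.1 + da p.2).val + 2 * encKey4 (key4fun α β p)

lemma rel4_iff_keyN4 (α β : Fin 2 → Fin 2 → Fin 4 → Fin 4 → ZMod 8)
    (p q : Fin 8 × Fin 8) : Rel4 α β p q ↔ keyN4 α β p = keyN4 α β q := by
  constructor
  · rintro ⟨hm, cc, hcc⟩
    unfold keyN4
    rw [hm]
    have hk : key4fun α β p = key4fun α β q := by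
      funext l
      unfold key4fun
      rw [hcc l, hcc 0]
      ring
    rw [hk]
  · intro h
    unfold keyN4 at h
    have hm1 : (da p.1 + da p.2).val < 2 := (da p.1 + da p.2).isLt
    have hm2 : (da q.1 + da q.2).val < 2 := (da q.1 + da q.2).isLt
    have hmv : (da p.1 + da p.2).val = (da q.1 + da q.2).val := by omega
    have hE : encKey4 (key4fun α β p) = encKey4 (key4fun α β q) := by omega
    have hm : da p.1 + da p.2 = da q.1 + da q.2 := Fin.ext hmv
    refine ⟨hm, bex α β p 0 - bex α β q 0, fun l => ?_⟩
    have h' := congrFun (encKey4_inj hE) l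
    unfold key4fun at h'
    linear_combination h'

theorem master2' (α β : Fin 2 → Fin 2 → Fin 4 → Fin 4 → ZMod 8) (c : ℕ)
    (r : Fin c → Fin 8 × Fin 8) (g : Fin 8 × Fin 8 → Fin c) (keyL : List ℕ)
    (hα : ∀ a b : Fin 2, ∀ s s' : Fin 4, s ≠ s' → Bal (fun l => α a b s' l - α a b s l))
    (hβ : ∀ a b : Fin 2, ∀ t t' : Fin 4, t ≠ t' → Bal (fun l => β a b t' l - β a b t l))
    (hlen : keyL.length = c)
    (h1 : ∀ p : Fin 8 × Fin 8, keyN4 α β p = keyL.get ⟨(g p).val, by rw [hlen]; exact (g p).isLt⟩)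
    (h2 : ∀ k : Fin c, g (r k) = k)
    (hnd : keyL.Nodup) :
    ∃ M : Fin 8 → Fin 8 → EuclideanSpace ℂ (Fin 2 × Fin 2 × Fin 2),
      IsQLSIdx M ∧ FamCardEq (fun p : Fin 8 × Fin 8 => M p.1 p.2) c := by
  have hkey : ∀ k : Fin c, keyN4 α β (r k) = keyL.get ⟨k.val, by rw [hlen]; exact k.isLt⟩ := by
    intro k
    have := h1 (r k)
    rwa [h2 k] at this
  refine master2 α β c r g hα hβ ?_ ?_
  · intro p
    rw [rel4_iff_keyN4]
    rw [h1 p, hkey (g p)]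
  · intro k k' hkk
    rw [rel4_iff_keyN4, hkey k, hkey k']
    intro hh
    have h2 := List.nodup_iff_injective_get.mp hnd hh
    have h3 : k.val = k'.val := by
      have := congrArg Fin.val h2
      simpa using this
    exact hkk (Fin.ext h3)


def fA8 : Fin 8 → Fin 8 → ZMod 8 := ![![0,0,0,0,0,0,0,0],![0,2,4,6,0,2,4,6],![0,4,0,4,0,4,0,4],![0,6,4,2,0,6,4,2],![3,5,3,1,7,1,7,5],![3,7,7,7,7,3,3,3],![3,1,3,5,7,5,7,1],![3,3,7,3,7,7,3,7]]
def fB8 : Fin 8 → Fin 8 → ZMod 8 := ![![0,0,0,0,0,0,0,0],![0,6,4,2,0,6,4,2],![0,4,0,4,0,4,0,4],![0,2,4,6,0,2,4,6],![3,1,3,5,7,5,7,1],![3,7,7,7,7,3,3,3],![3,5,3,1,7,1,7,5],![3,3,7,3,7,7,3,7]]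
def fr8 : Fin 8 → Fin 8 × Fin 8 := ![(0,0),(0,1),(0,2),(0,3),(0,4),(0,5),(0,6),(0,7)]
def fg8 : Fin 8 → Fin 8 → Fin 8 := ![![0,1,2,3,4,5,6,7],![3,0,1,2,7,4,5,6],![2,3,0,1,6,7,4,5],![1,2,3,0,5,6,7,4],![6,7,4,5,0,1,2,3],![5,6,7,4,3,0,1,2],![4,5,6,7,2,3,0,1],![7,4,5,6,1,2,3,0]]
def fk8 : List ℕ := [0,5440816,8521760,13700368,13714480,18720,5458960,8536320]

theorem case_8 :
    ∃ M : Fin 8 → Fin 8 → EuclideanSpace ℂ (Fin 2 × Fin 2 × Fin 2),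
      IsQLSIdx M ∧ FamCardEq (fun p : Fin 8 × Fin 8 => M p.1 p.2) 8 :=
  master1' fA8 fB8 8 fr8 (fun p => fg8 p.1 p.2) fk8
    (by decide +kernel) (by decide +kernel) (by decide +kernel) (by decide +kernel) (by decide +kernel) (by decide +kernel)

def bA10 : Fin 2 → Fin 2 → Fin 4 → Fin 4 → ZMod 8 := ![![![![0,0,0,0],![0,0,4,4],![0,4,0,4],![0,4,4,0]],![![0,0,0,0],![0,0,4,4],![0,4,0,4],![0,4,4,0]]],![![![0,0,0,0],![0,0,4,4],![0,4,2,6],![0,4,6,2]],![![0,0,0,0],![0,0,4,4],![0,4,0,4],![0,4,4,0]]]]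
def bB10 : Fin 2 → Fin 2 → Fin 4 → Fin 4 → ZMod 8 := ![![![![0,0,0,0],![0,0,4,4],![0,4,0,4],![0,4,4,0]],![![0,0,0,0],![0,0,4,4],![0,4,0,4],![0,4,4,0]]],![![![0,0,0,0],![0,0,4,4],![0,4,2,6],![0,4,6,2]],![![0,0,0,0],![0,0,4,4],![0,4,0,4],![0,4,4,0]]]]
def br10 : Fin 10 → Fin 8 × Fin 8 := ![(0,0),(0,1),(0,2),(0,3),(0,4),(0,5),(0,6),(0,7),(4,2),(4,3)]
def bg10 : Fin 8 → Fin 8 → Fin 10 := ![![0,1,2,3,4,5,6,7],![1,0,3,2,5,4,7,6],![2,3,0,1,6,7,4,5],![3,2,1,0,7,6,5,4],![4,5,8,9,0,1,2,3],![5,4,9,8,1,0,3,2],![8,9,5,4,2,3,0,1],![9,8,4,5,3,2,1,0]]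
def bk10 : List ℕ := [0,4608,4160,576,1,4609,4161,577,6465,2881]

theorem case_10 :
    ∃ M : Fin 8 → Fin 8 → EuclideanSpace ℂ (Fin 2 × Fin 2 × Fin 2),
      IsQLSIdx M ∧ FamCardEq (fun p : Fin 8 × Fin 8 => M p.1 p.2) 10 :=
  master2' bA10 bB10 10 br10 (fun p => bg10 p.1 p.2) bk10
    (by decide +kernel) (by decide +kernel) (by decide +kernel) (by decide +kernel) (by decide +kernel) (by decide +kernel)

def bA11 : Fin 2 → Fin 2 → Fin 4 → Fin 4 → ZMod 8 := ![![![![0,0,0,0],![0,0,4,4],![0,4,0,4],![0,4,4,0]],![![0,0,0,0],![0,0,4,4],![0,4,2,6],![0,4,6,2]]],![![![0,0,0,0],![0,2,4,6],![0,4,0,4],![0,6,4,2]],![![0,0,0,0],![0,0,4,4],![0,4,0,4],![0,4,4,0]]]]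
def bB11 : Fin 2 → Fin 2 → Fin 4 → Fin 4 → ZMod 8 := ![![![![0,0,0,0],![0,0,4,4],![0,4,0,4],![0,4,4,0]],![![0,0,0,0],![0,0,4,4],![0,4,2,6],![0,4,6,2]]],![![![0,0,0,0],![0,2,4,6],![0,4,0,4],![0,6,4,2]],![![0,0,0,0],![0,0,4,4],![0,4,0,4],![0,4,4,0]]]]
def br11 : Fin 11 → Fin 8 × Fin 8 := ![(0,0),(0,1),(0,2),(0,3),(0,4),(0,5),(0,6),(0,7),(4,1),(4,2),(4,3)]
def bg11 : Fin 8 → Fin 8 → Fin 11 := ![![0,1,2,3,4,5,6,7],![1,0,3,2,5,4,7,6],![2,3,0,1,6,7,5,4],![3,2,1,0,7,6,4,5],![4,8,9,10,0,1,2,3],![8,9,10,4,1,0,3,2],![9,10,4,8,2,3,0,1],![10,4,8,9,3,2,1,0]]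
def bk11 : List ℕ := [0,4608,4160,576,1,4609,6465,2881,6689,4161,2657]

theorem case_11 :
    ∃ M : Fin 8 → Fin 8 → EuclideanSpace ℂ (Fin 2 × Fin 2 × Fin 2),
      IsQLSIdx M ∧ FamCardEq (fun p : Fin 8 × Fin 8 => M p.1 p.2) 11 :=
  master2' bA11 bB11 11 br11 (fun p => bg11 p.1 p.2) bk11
    (by decide +kernel) (by decide +kernel) (by decide +kernel) (by decide +kernel) (by decide +kernel) (by decide +kernel)

def fA12 : Fin 8 → Fin 8 → ZMod 8 := ![![0,0,0,0,0,0,0,0],![0,0,6,4,1,2,5,4],![0,2,6,2,4,6,4,0],![0,2,4,6,5,0,1,4],![0,6,2,6,4,2,4,0],![0,4,4,4,0,4,0,0],![0,4,2,0,1,6,5,4],![0,6,0,2,5,4,1,4]]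
def fB12 : Fin 8 → Fin 8 → ZMod 8 := ![![0,0,0,0,0,0,0,0],![0,0,6,4,1,2,5,4],![0,2,6,2,4,6,4,0],![0,2,4,6,5,0,1,4],![0,6,2,6,4,2,4,0],![0,4,4,4,0,4,0,0],![0,4,2,0,1,6,5,4],![0,6,0,2,5,4,1,4]]
def fr12 : Fin 12 → Fin 8 × Fin 8 := ![(0,0),(0,1),(0,2),(0,3),(0,4),(0,5),(0,6),(0,7),(1,1),(1,3),(1,6),(1,7)]
def fg12 : Fin 8 → Fin 8 → Fin 12 := ![![0,1,2,3,4,5,6,7],![1,8,3,9,7,6,10,11],![2,3,5,6,0,4,7,1],![3,9,6,10,1,7,11,8],![4,7,0,1,5,2,3,6],![5,6,4,7,2,0,1,3],![6,10,7,11,3,1,8,9],![7,11,1,8,6,3,9,10]]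
def fk12 : List ℕ := [0,9771392,1262992,8674576,1133744,133408,9900192,8803376,663808,1664144,534560,1797552]

theorem case_12 :
    ∃ M : Fin 8 → Fin 8 → EuclideanSpace ℂ (Fin 2 × Fin 2 × Fin 2),
      IsQLSIdx M ∧ FamCardEq (fun p : Fin 8 × Fin 8 => M p.1 p.2) 12 :=
  master1' fA12 fB12 12 fr12 (fun p => fg12 p.1 p.2) fk12
    (by decide +kernel) (by decide +kernel) (by decide +kernel) (by decide +kernel) (by decide +kernel) (by decide +kernel)

def bA13 : Fin 2 → Fin 2 → Fin 4 → Fin 4 → ZMod 8 := ![![![![0,0,0,0],![0,0,4,4],![0,4,0,4],![0,4,4,0]],![![0,0,0,0],![0,0,4,4],![0,4,1,5],![0,4,5,1]]],![![![0,0,0,0],![0,2,4,6],![0,4,0,4],![0,6,4,2]],![![0,0,0,0],![0,0,4,4],![0,4,0,4],![0,4,4,0]]]]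
def bB13 : Fin 2 → Fin 2 → Fin 4 → Fin 4 → ZMod 8 := ![![![![0,0,0,0],![0,0,4,4],![0,4,0,4],![0,4,4,0]],![![0,0,0,0],![0,0,4,4],![0,4,1,5],![0,4,5,1]]],![![![0,0,0,0],![0,2,4,6],![0,4,0,4],![0,6,4,2]],![![0,0,0,0],![0,0,4,4],![0,4,0,4],![0,4,4,0]]]]
def br13 : Fin 13 → Fin 8 × Fin 8 := ![(0,0),(0,1),(0,2),(0,3),(0,4),(0,5),(0,6),(0,7),(2,6),(2,7),(4,1),(4,2),(4,3)]
def bg13 : Fin 8 → Fin 8 → Fin 13 := ![![0,1,2,3,4,5,6,7],![1,0,3,2,5,4,7,6],![2,3,0,1,6,7,8,9],![3,2,1,0,7,6,9,8],![4,10,11,12,0,1,2,3],![10,11,12,4,1,0,3,2],![11,12,4,10,2,3,0,1],![12,4,10,11,3,2,1,0]]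
def bk13 : List ℕ := [0,4608,4160,576,1,4609,5313,1729,2305,6913,6689,4161,2657]

theorem case_13 :
    ∃ M : Fin 8 → Fin 8 → EuclideanSpace ℂ (Fin 2 × Fin 2 × Fin 2),
      IsQLSIdx M ∧ FamCardEq (fun p : Fin 8 × Fin 8 => M p.1 p.2) 13 :=
  master2' bA13 bB13 13 br13 (fun p => bg13 p.1 p.2) bk13
    (by decide +kernel) (by decide +kernel) (by decide +kernel) (by decide +kernel) (by decide +kernel) (by decide +kernel)

def fA14 : Fin 8 → Fin 8 → ZMod 8 := ![![0,0,0,0,0,0,0,0],![0,2,4,6,0,2,4,6],![0,4,0,4,0,4,0,4],![0,6,4,2,0,6,4,2],![0,4,2,6,4,0,6,2],![0,0,2,2,4,4,6,6],![0,0,6,6,4,4,2,2],![0,4,6,2,4,0,2,6]]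
def fB14 : Fin 8 → Fin 8 → ZMod 8 := ![![0,0,0,0,0,0,0,0],![0,2,4,6,0,2,4,6],![0,4,0,4,0,4,0,4],![0,6,4,2,0,6,4,2],![0,4,2,6,4,0,6,2],![0,0,2,2,4,4,6,6],![0,0,6,6,4,4,2,2],![0,4,6,2,4,0,2,6]]
def fr14 : Fin 14 → Fin 8 × Fin 8 := ![(0,0),(0,1),(0,2),(0,3),(0,4),(0,5),(0,6),(0,7),(1,4),(1,5),(1,6),(1,7),(4,4),(4,5)]
def fg14 : Fin 8 → Fin 8 → Fin 14 := ![![0,1,2,3,4,5,6,7],![1,2,3,0,8,9,10,11],![2,3,0,1,5,4,7,6],![3,0,1,2,9,8,11,10],![4,8,5,9,12,13,2,0],![5,9,4,8,13,12,0,2],![6,10,7,11,2,0,12,13],![7,11,6,10,0,2,13,12]]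
def fk14 : List ℕ := [0,13700368,8521760,5440816,5786784,14304384,4869504,13125024,608688,9126288,1788048,10043568,9439488,1179936]

theorem case_14 :
    ∃ M : Fin 8 → Fin 8 → EuclideanSpace ℂ (Fin 2 × Fin 2 × Fin 2),
      IsQLSIdx M ∧ FamCardEq (fun p : Fin 8 × Fin 8 => M p.1 p.2) 14 :=
  master1' fA14 fB14 14 fr14 (fun p => fg14 p.1 p.2) fk14
    (by decide +kernel) (by decide +kernel) (by decide +kernel) (by decide +kernel) (by decide +kernel) (by decide +kernel)

def bA15 : Fin 2 → Fin 2 → Fin 4 → Fin 4 → ZMod 8 := ![![![![0,0,0,0],![0,0,4,4],![0,4,0,4],![0,4,4,0]],![![0,0,0,0],![0,0,4,4],![0,4,1,5],![0,4,5,1]]],![![![0,0,0,0],![0,1,4,5],![0,4,0,4],![0,5,4,1]],![![0,0,0,0],![0,0,4,4],![0,4,0,4],![0,4,4,0]]]]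
def bB15 : Fin 2 → Fin 2 → Fin 4 → Fin 4 → ZMod 8 := ![![![![0,0,0,0],![0,0,4,4],![0,4,0,4],![0,4,4,0]],![![0,0,0,0],![0,0,4,4],![0,4,1,5],![0,4,5,1]]],![![![0,0,0,0],![0,1,4,5],![0,4,0,4],![0,5,4,1]],![![0,0,0,0],![0,0,4,4],![0,4,0,4],![0,4,4,0]]]]
def br15 : Fin 15 → Fin 8 × Fin 8 := ![(0,0),(0,1),(0,2),(0,3),(0,4),(0,5),(0,6),(0,7),(2,6),(2,7),(4,1),(4,2),(4,3),(5,1),(5,3)]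
def bg15 : Fin 8 → Fin 8 → Fin 15 := ![![0,1,2,3,4,5,6,7],![1,0,3,2,5,4,7,6],![2,3,0,1,6,7,8,9],![3,2,1,0,7,6,9,8],![4,10,11,12,0,1,2,3],![10,13,12,14,1,0,3,2],![11,12,4,10,2,3,0,1],![12,14,10,13,3,2,1,0]]
def bk15 : List ℕ := [0,4608,4160,576,1,4609,5313,1729,2305,6913,5649,4161,1617,2081,6241]

theorem case_15 :
    ∃ M : Fin 8 → Fin 8 → EuclideanSpace ℂ (Fin 2 × Fin 2 × Fin 2),
      IsQLSIdx M ∧ FamCardEq (fun p : Fin 8 × Fin 8 => M p.1 p.2) 15 :=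
  master2' bA15 bB15 15 br15 (fun p => bg15 p.1 p.2) bk15
    (by decide +kernel) (by decide +kernel) (by decide +kernel) (by decide +kernel) (by decide +kernel) (by decide +kernel)

def fA16 : Fin 8 → Fin 8 → ZMod 8 := ![![0,0,0,0,0,0,0,0],![0,2,4,6,0,2,4,6],![0,4,0,4,0,4,0,4],![0,6,4,2,0,6,4,2],![5,0,4,7,1,4,0,3],![5,2,0,5,1,6,4,1],![5,4,4,3,1,0,0,7],![5,6,0,1,1,2,4,5]]
def fB16 : Fin 8 → Fin 8 → ZMod 8 := ![![0,0,0,0,0,0,0,0],![2,4,6,0,2,4,6,0],![4,0,4,0,4,0,4,0],![6,4,2,0,6,4,2,0],![2,1,0,0,6,5,4,4],![4,5,6,0,0,1,2,4],![6,1,4,0,2,5,0,4],![0,5,2,0,4,1,6,4]]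
def fr16 : Fin 16 → Fin 8 × Fin 8 := ![(0,0),(0,1),(0,2),(0,3),(0,4),(0,5),(0,6),(0,7),(4,0),(4,1),(4,2),(4,3),(4,4),(4,5),(4,6),(4,7)]
def fg16 : Fin 8 → Fin 8 → Fin 16 := ![![0,1,2,3,4,5,6,7],![1,2,3,0,5,6,7,4],![2,3,0,1,6,7,4,5],![3,0,1,2,7,4,5,6],![8,9,10,11,12,13,14,15],![9,10,11,8,13,14,15,12],![10,11,8,9,14,15,12,13],![11,8,9,10,15,12,13,14]]
def fk16 : List ℕ := [0,13700368,8521760,5440816,4836792,1755272,13354392,10010792,13616600,10273000,5099000,2017480,1376592,12979296,9898352,4457536]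

theorem case_16 :
    ∃ M : Fin 8 → Fin 8 → EuclideanSpace ℂ (Fin 2 × Fin 2 × Fin 2),
      IsQLSIdx M ∧ FamCardEq (fun p : Fin 8 × Fin 8 => M p.1 p.2) 16 :=
  master1' fA16 fB16 16 fr16 (fun p => fg16 p.1 p.2) fk16
    (by decide +kernel) (by decide +kernel) (by decide +kernel) (by decide +kernel) (by decide +kernel) (by decide +kernel)

def bA17 : Fin 2 → Fin 2 → Fin 4 → Fin 4 → ZMod 8 := ![![![![0,0,0,0],![0,0,4,4],![0,4,0,4],![0,4,4,0]],![![0,0,0,0],![0,0,4,4],![0,4,1,5],![0,4,5,1]]],![![![0,0,0,0],![0,1,4,5],![0,4,0,4],![0,5,4,1]],![![0,0,0,0],![0,0,4,4],![0,4,0,4],![0,4,4,0]]]]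
def bB17 : Fin 2 → Fin 2 → Fin 4 → Fin 4 → ZMod 8 := ![![![![0,0,0,0],![0,0,4,4],![0,4,0,4],![0,4,4,0]],![![0,0,0,0],![0,0,4,4],![0,4,1,5],![0,4,5,1]]],![![![0,0,0,0],![0,2,4,6],![0,4,0,4],![0,6,4,2]],![![0,0,0,0],![0,0,4,4],![0,4,0,4],![0,4,4,0]]]]
def br17 : Fin 17 → Fin 8 × Fin 8 := ![(0,0),(0,1),(0,2),(0,3),(0,4),(0,5),(0,6),(0,7),(2,6),(2,7),(4,1),(4,2),(4,3),(5,0),(5,1),(5,2),(5,3)]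
def bg17 : Fin 8 → Fin 8 → Fin 17 := ![![0,1,2,3,4,5,6,7],![1,0,3,2,5,4,7,6],![2,3,0,1,6,7,8,9],![3,2,1,0,7,6,9,8],![4,10,11,12,0,1,2,3],![13,14,15,16,1,0,3,2],![11,12,4,10,2,3,0,1],![15,16,13,14,3,2,1,0]]
def bk17 : List ℕ := [0,4608,4160,576,1,4609,5313,1729,2305,6913,6689,4161,2657,5649,3121,1617,7281]

theorem case_17 :
    ∃ M : Fin 8 → Fin 8 → EuclideanSpace ℂ (Fin 2 × Fin 2 × Fin 2),
      IsQLSIdx M ∧ FamCardEq (fun p : Fin 8 × Fin 8 => M p.1 p.2) 17 :=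
  master2' bA17 bB17 17 br17 (fun p => bg17 p.1 p.2) bk17
    (by decide +kernel) (by decide +kernel) (by decide +kernel) (by decide +kernel) (by decide +kernel) (by decide +kernel)

def fA18 : Fin 8 → Fin 8 → ZMod 8 := ![![0,0,0,0,0,0,0,0],![0,1,7,5,6,3,4,2],![0,5,1,5,4,1,0,4],![0,5,3,1,6,7,4,2],![0,6,0,2,2,4,4,6],![0,1,5,1,4,5,0,4],![0,2,4,6,2,0,4,6],![0,4,4,4,0,4,0,0]]
def fB18 : Fin 8 → Fin 8 → ZMod 8 := ![![0,0,0,0,0,0,0,0],![0,1,7,5,6,3,4,2],![0,5,1,5,4,1,0,4],![0,5,3,1,6,7,4,2],![0,6,0,2,2,4,4,6],![0,1,5,1,4,5,0,4],![0,2,4,6,2,0,4,6],![0,4,4,4,0,4,0,0]]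
def fr18 : Fin 18 → Fin 8 × Fin 8 := ![(0,0),(0,1),(0,2),(0,3),(0,4),(0,5),(0,6),(0,7),(1,1),(1,3),(1,4),(1,6),(2,2),(2,4),(2,5),(2,6),(4,4),(4,6)]
def fg18 : Fin 8 → Fin 8 → Fin 18 := ![![0,1,2,3,4,5,6,7],![1,8,4,9,10,6,11,3],![2,4,12,6,13,14,15,5],![3,9,6,8,11,4,10,1],![4,10,13,11,16,15,17,6],![5,6,14,4,15,12,13,2],![6,11,15,10,17,13,16,4],![7,3,5,1,6,2,4,0]]
def fk18 : List ℕ := [0,5368776,8440424,5497576,13771824,8569672,13643024,133408,8603024,8473776,233464,100056,66704,5434968,200112,5302136,8407072,8536320]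

theorem case_18 :
    ∃ M : Fin 8 → Fin 8 → EuclideanSpace ℂ (Fin 2 × Fin 2 × Fin 2),
      IsQLSIdx M ∧ FamCardEq (fun p : Fin 8 × Fin 8 => M p.1 p.2) 18 :=
  master1' fA18 fB18 18 fr18 (fun p => fg18 p.1 p.2) fk18
    (by decide +kernel) (by decide +kernel) (by decide +kernel) (by decide +kernel) (by decide +kernel) (by decide +kernel)

def bA19 : Fin 2 → Fin 2 → Fin 4 → Fin 4 → ZMod 8 := ![![![![0,0,0,0],![0,0,4,4],![0,4,0,4],![0,4,4,0]],![![0,0,0,0],![0,0,4,4],![0,4,1,5],![0,4,5,1]]],![![![0,0,0,0],![0,1,4,5],![0,4,0,4],![0,5,4,1]],![![0,0,0,0],![0,0,4,4],![0,4,0,4],![0,4,4,0]]]]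
def bB19 : Fin 2 → Fin 2 → Fin 4 → Fin 4 → ZMod 8 := ![![![![0,0,0,0],![0,0,4,4],![0,4,0,4],![0,4,4,0]],![![0,0,0,0],![0,0,4,4],![0,4,2,6],![0,4,6,2]]],![![![0,0,0,0],![0,2,4,6],![0,4,0,4],![0,6,4,2]],![![0,0,0,0],![0,0,4,4],![0,4,0,4],![0,4,4,0]]]]
def br19 : Fin 19 → Fin 8 × Fin 8 := ![(0,0),(0,1),(0,2),(0,3),(0,4),(0,5),(0,6),(0,7),(2,4),(2,5),(2,6),(2,7),(4,1),(4,2),(4,3),(5,0),(5,1),(5,2),(5,3)]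
def bg19 : Fin 8 → Fin 8 → Fin 19 := ![![0,1,2,3,4,5,6,7],![1,0,3,2,5,4,7,6],![2,3,0,1,8,9,10,11],![3,2,1,0,9,8,11,10],![4,12,13,14,0,1,2,3],![15,16,17,18,1,0,3,2],![13,14,4,12,2,3,0,1],![17,18,15,16,3,2,1,0]]
def bk19 : List ℕ := [0,4608,4160,576,1,4609,6465,2881,5313,1729,3457,8065,6689,4161,2657,5649,3121,1617,7281]

theorem case_19 :
    ∃ M : Fin 8 → Fin 8 → EuclideanSpace ℂ (Fin 2 × Fin 2 × Fin 2),
      IsQLSIdx M ∧ FamCardEq (fun p : Fin 8 × Fin 8 => M p.1 p.2) 19 :=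
  master2' bA19 bB19 19 br19 (fun p => bg19 p.1 p.2) bk19
    (by decide +kernel) (by decide +kernel) (by decide +kernel) (by decide +kernel) (by decide +kernel) (by decide +kernel)

def fA20 : Fin 8 → Fin 8 → ZMod 8 := ![![0,0,0,0,0,0,0,0],![0,0,4,1,4,0,4,5],![0,7,5,3,7,4,1,3],![0,3,5,7,3,4,1,7],![0,6,1,3,2,4,5,7],![0,4,4,5,0,0,4,1],![0,2,1,7,6,4,5,3],![0,4,0,4,4,0,0,4]]
def fB20 : Fin 8 → Fin 8 → ZMod 8 := ![![0,0,0,0,0,0,0,0],![0,0,4,1,4,0,4,5],![0,7,5,3,7,4,1,3],![0,3,5,7,3,4,1,7],![0,6,1,3,2,4,5,7],![0,4,4,5,0,0,4,1],![0,2,1,7,6,4,5,3],![0,4,0,4,4,0,0,4]]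
def fr20 : Fin 20 → Fin 8 × Fin 8 := ![(0,0),(0,1),(0,2),(0,3),(0,4),(0,5),(0,6),(0,7),(1,1),(1,2),(1,3),(1,4),(1,5),(1,6),(2,2),(2,3),(2,4),(2,6),(4,4),(4,6)]
def fg20 : Fin 8 → Fin 8 → Fin 20 := ![![0,1,2,3,4,5,6,7],![1,8,9,10,11,12,13,5],![2,9,14,15,16,10,17,3],![3,10,15,14,17,9,16,2],![4,11,16,17,18,13,19,6],![5,12,10,9,13,8,11,1],![6,13,17,16,19,11,18,4],![7,5,3,2,6,1,4,0]]
def fk20 : List ℕ := [0,11551488,6715256,15089496,16131696,3148576,7761488,8407072,4195328,1456248,9859160,8808816,12602400,401744,13135024,4727952,5774760,14177672,13126816,4719744]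

theorem case_20 :
    ∃ M : Fin 8 → Fin 8 → EuclideanSpace ℂ (Fin 2 × Fin 2 × Fin 2),
      IsQLSIdx M ∧ FamCardEq (fun p : Fin 8 × Fin 8 => M p.1 p.2) 20 :=
  master1' fA20 fB20 20 fr20 (fun p => fg20 p.1 p.2) fk20
    (by decide +kernel) (by decide +kernel) (by decide +kernel) (by decide +kernel) (by decide +kernel) (by decide +kernel)

def bA21 : Fin 2 → Fin 2 → Fin 4 → Fin 4 → ZMod 8 := ![![![![0,0,0,0],![0,0,4,4],![0,4,0,4],![0,4,4,0]],![![0,0,0,0],![0,0,4,4],![0,4,1,5],![0,4,5,1]]],![![![0,0,0,0],![0,1,4,5],![0,4,0,4],![0,5,4,1]],![![0,0,0,0],![0,0,4,4],![0,4,2,6],![0,4,6,2]]]]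
def bB21 : Fin 2 → Fin 2 → Fin 4 → Fin 4 → ZMod 8 := ![![![![0,0,0,0],![0,0,4,4],![0,4,0,4],![0,4,4,0]],![![0,0,0,0],![0,0,4,4],![0,4,2,6],![0,4,6,2]]],![![![0,0,0,0],![0,2,4,6],![0,4,0,4],![0,6,4,2]],![![0,0,0,0],![0,0,4,4],![0,4,2,6],![0,4,6,2]]]]
def br21 : Fin 21 → Fin 8 × Fin 8 := ![(0,0),(0,1),(0,2),(0,3),(0,4),(0,5),(0,6),(0,7),(2,4),(2,5),(2,6),(2,7),(4,1),(4,2),(4,3),(4,6),(4,7),(5,0),(5,1),(5,2),(5,3)]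
def bg21 : Fin 8 → Fin 8 → Fin 21 := ![![0,1,2,3,4,5,6,7],![1,0,3,2,5,4,7,6],![2,3,0,1,8,9,10,11],![3,2,1,0,9,8,11,10],![4,12,13,14,0,1,15,16],![17,18,19,20,1,0,16,15],![13,14,4,12,15,16,1,0],![19,20,17,18,16,15,0,1]]
def bk21 : List ℕ := [0,4608,4160,576,1,4609,6465,2881,5313,1729,3457,8065,6689,4161,2657,6464,2880,5649,3121,1617,7281]

theorem case_21 :
    ∃ M : Fin 8 → Fin 8 → EuclideanSpace ℂ (Fin 2 × Fin 2 × Fin 2),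
      IsQLSIdx M ∧ FamCardEq (fun p : Fin 8 × Fin 8 => M p.1 p.2) 21 :=
  master2' bA21 bB21 21 br21 (fun p => bg21 p.1 p.2) bk21
    (by decide +kernel) (by decide +kernel) (by decide +kernel) (by decide +kernel) (by decide +kernel) (by decide +kernel)

def fA22 : Fin 8 → Fin 8 → ZMod 8 := ![![0,0,0,0,0,0,0,0],![0,1,7,5,6,3,4,2],![0,5,1,5,4,1,0,4],![0,5,3,1,6,7,4,2],![0,6,0,2,2,4,4,6],![0,1,5,1,4,5,0,4],![0,2,4,6,2,0,4,6],![0,4,4,4,0,4,0,0]]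
def fB22 : Fin 8 → Fin 8 → ZMod 8 := ![![0,0,0,0,0,0,0,0],![0,1,7,5,6,3,4,2],![0,5,1,5,4,1,0,4],![0,5,3,1,6,7,4,2],![0,1,3,5,2,7,4,6],![0,1,5,1,4,5,0,4],![0,5,7,1,2,3,4,6],![0,4,4,4,0,4,0,0]]
def fr22 : Fin 22 → Fin 8 × Fin 8 := ![(0,0),(0,1),(0,2),(0,3),(0,4),(0,5),(0,6),(0,7),(1,1),(1,2),(1,3),(1,4),(1,5),(1,6),(2,4),(2,6),(4,1),(4,2),(4,3),(4,4),(4,5),(4,6)]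
def fg22 : Fin 8 → Fin 8 → Fin 22 := ![![0,1,2,3,4,5,6,7],![1,8,9,10,11,12,13,3],![2,9,11,12,14,13,15,5],![3,10,12,8,13,9,11,1],![9,16,17,18,19,20,21,12],![5,12,13,9,15,11,14,2],![12,18,20,16,21,17,19,9],![7,3,5,1,6,2,4,0]]
def fk22 : List ℕ := [0,5368776,8440424,5497576,13871816,8569672,13738984,133408,8603024,13771824,8473776,66704,13643024,200112,5268784,5401616,233464,5434968,100056,8507128,5302136,8636376]

theorem case_22 :
    ∃ M : Fin 8 → Fin 8 → EuclideanSpace ℂ (Fin 2 × Fin 2 × Fin 2),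
      IsQLSIdx M ∧ FamCardEq (fun p : Fin 8 × Fin 8 => M p.1 p.2) 22 :=
  master1' fA22 fB22 22 fr22 (fun p => fg22 p.1 p.2) fk22
    (by decide +kernel) (by decide +kernel) (by decide +kernel) (by decide +kernel) (by decide +kernel) (by decide +kernel)

def fA23 : Fin 8 → Fin 8 → ZMod 8 := ![![0,0,0,0,0,0,0,0],![0,2,4,6,0,2,4,6],![0,4,0,4,0,4,0,4],![0,6,4,2,0,6,4,2],![0,4,4,4,4,0,0,0],![0,2,6,0,4,6,2,4],![0,6,2,0,4,2,6,4],![0,0,0,4,4,4,4,0]]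
def fB23 : Fin 8 → Fin 8 → ZMod 8 := ![![0,0,0,0,0,0,0,0],![0,2,4,6,0,2,4,6],![0,4,0,4,0,4,0,4],![0,6,4,2,0,6,4,2],![0,4,4,4,4,0,0,0],![0,2,6,0,4,6,2,4],![0,6,2,0,4,2,6,4],![0,0,0,4,4,4,4,0]]
def fr23 : Fin 23 → Fin 8 × Fin 8 := ![(0,0),(0,1),(0,2),(0,3),(0,4),(0,5),(0,6),(0,7),(1,4),(1,5),(1,6),(1,7),(2,4),(2,5),(2,6),(2,7),(3,4),(3,5),(3,6),(3,7),(4,5),(4,6),(4,7)]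
def fg23 : Fin 8 → Fin 8 → Fin 23 := ![![0,1,2,3,4,5,6,7],![1,2,3,0,8,9,10,11],![2,3,0,1,12,13,14,15],![3,0,1,2,16,17,18,19],![4,8,12,16,0,20,21,22],![5,9,13,17,20,22,0,21],![6,10,14,18,21,0,22,20],![7,11,15,19,22,21,20,0]]
def fk23 : List ℕ := [0,13700368,8521760,5440816,18720,9126288,10043568,1198080,13714480,5786784,4869504,12797200,8536320,608688,1788048,9453600,5458960,14304384,13125024,4279600,9111728,10029456,1179936]

theorem case_23 :
    ∃ M : Fin 8 → Fin 8 → EuclideanSpace ℂ (Fin 2 × Fin 2 × Fin 2),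
      IsQLSIdx M ∧ FamCardEq (fun p : Fin 8 × Fin 8 => M p.1 p.2) 23 :=
  master1' fA23 fB23 23 fr23 (fun p => fg23 p.1 p.2) fk23
    (by decide +kernel) (by decide +kernel) (by decide +kernel) (by decide +kernel) (by decide +kernel) (by decide +kernel)

def fA24 : Fin 8 → Fin 8 → ZMod 8 := ![![0,0,0,0,0,0,0,0],![0,2,4,6,0,2,4,6],![0,4,0,4,0,4,0,4],![0,6,4,2,0,6,4,2],![7,3,2,3,3,7,6,7],![7,5,6,1,3,1,2,5],![7,7,2,7,3,3,6,3],![7,1,6,5,3,5,2,1]]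
def fB24 : Fin 8 → Fin 8 → ZMod 8 := ![![0,0,0,0,0,0,0,0],![2,4,6,4,2,0,6,0],![4,0,4,0,4,0,4,0],![6,4,2,4,6,0,2,0],![7,3,4,7,3,3,0,7],![1,7,2,3,5,3,6,7],![3,3,0,7,7,3,4,7],![5,7,6,3,1,3,2,7]]
def fr24 : Fin 24 → Fin 8 × Fin 8 := ![(0,0),(0,1),(0,2),(0,3),(0,4),(0,5),(0,6),(0,7),(1,0),(1,1),(1,2),(1,3),(1,4),(1,5),(1,6),(1,7),(4,0),(4,1),(4,2),(4,3),(5,0),(5,1),(5,2),(5,3)]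
def fg24 : Fin 8 → Fin 8 → Fin 24 := ![![0,1,2,3,4,5,6,7],![8,9,10,11,12,13,14,15],![2,3,0,1,6,7,4,5],![10,11,8,9,14,15,12,13],![16,17,18,19,11,8,9,10],![20,21,22,23,1,2,3,0],![18,19,16,17,9,10,11,8],![22,23,20,21,3,0,1,2]]
def fk24 : List ℕ := [0,13829392,8521760,5311792,409952,13976688,8669504,5721168,13700368,8388640,5440816,133120,14109808,8798528,5588048,280928,1853664,13585904,10371264,5064144,13452784,10242240,5197264,1982688]

theorem case_24 :
    ∃ M : Fin 8 → Fin 8 → EuclideanSpace ℂ (Fin 2 × Fin 2 × Fin 2),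
      IsQLSIdx M ∧ FamCardEq (fun p : Fin 8 × Fin 8 => M p.1 p.2) 24 :=
  master1' fA24 fB24 24 fr24 (fun p => fg24 p.1 p.2) fk24
    (by decide +kernel) (by decide +kernel) (by decide +kernel) (by decide +kernel) (by decide +kernel) (by decide +kernel)

def fA25 : Fin 8 → Fin 8 → ZMod 8 := ![![0,0,0,0,0,0,0,0],![0,2,4,6,0,2,4,6],![0,4,0,4,0,4,0,4],![0,6,4,2,0,6,4,2],![0,7,1,4,4,3,5,0],![0,3,4,3,4,7,0,7],![0,7,5,0,4,3,1,4],![0,3,0,7,4,7,4,3]]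
def fB25 : Fin 8 → Fin 8 → ZMod 8 := ![![0,0,0,0,0,0,0,0],![0,2,4,6,0,2,4,6],![0,4,0,4,0,4,0,4],![0,6,4,2,0,6,4,2],![0,7,1,4,4,3,5,0],![0,3,4,3,4,7,0,7],![0,7,5,0,4,3,1,4],![0,3,0,7,4,7,4,3]]
def fr25 : Fin 25 → Fin 8 × Fin 8 := ![(0,0),(0,1),(0,2),(0,3),(0,4),(0,5),(0,6),(0,7),(1,4),(1,5),(1,6),(1,7),(2,4),(2,5),(2,6),(2,7),(3,4),(3,5),(3,6),(3,7),(4,4),(4,5),(4,6),(4,7),(5,5)]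
def fg25 : Fin 8 → Fin 8 → Fin 25 := ![![0,1,2,3,4,5,6,7],![1,2,3,0,8,9,10,11],![2,3,0,1,12,13,14,15],![3,0,1,2,16,17,18,19],![4,8,12,16,20,21,22,23],![5,9,13,17,21,24,23,3],![6,10,14,18,22,23,20,21],![7,11,15,19,23,3,21,24]]
def fk25 : List ℕ := [0,13700368,8521760,5440816,1427576,14927640,8765816,7589400,13026632,11584040,5688392,2149160,9945176,6410040,510296,15844920,4509032,3328520,13943912,10666760,721072,16060240,10160560,6620752,12782640]

theorem case_25 :
    ∃ M : Fin 8 → Fin 8 → EuclideanSpace ℂ (Fin 2 × Fin 2 × Fin 2),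
      IsQLSIdx M ∧ FamCardEq (fun p : Fin 8 × Fin 8 => M p.1 p.2) 25 :=
  master1' fA25 fB25 25 fr25 (fun p => fg25 p.1 p.2) fk25
    (by decide +kernel) (by decide +kernel) (by decide +kernel) (by decide +kernel) (by decide +kernel) (by decide +kernel)

def fA26 : Fin 8 → Fin 8 → ZMod 8 := ![![0,0,0,0,0,0,0,0],![0,4,2,4,1,6,0,5],![0,4,2,0,6,2,4,6],![0,5,7,4,5,3,1,1],![0,0,4,0,4,4,0,4],![0,4,6,0,2,6,4,2],![0,0,6,4,1,2,4,5],![0,1,3,4,5,7,5,1]]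
def fB26 : Fin 8 → Fin 8 → ZMod 8 := ![![0,0,0,0,0,0,0,0],![0,4,2,4,1,6,0,5],![0,4,2,0,6,2,4,6],![0,5,7,4,5,3,1,1],![0,0,4,0,4,4,0,4],![0,4,6,0,2,6,4,2],![0,0,6,4,1,2,4,5],![0,1,3,4,5,7,5,1]]
def fr26 : Fin 26 → Fin 8 × Fin 8 := ![(0,0),(0,1),(0,2),(0,3),(0,4),(0,5),(0,6),(0,7),(1,1),(1,2),(1,3),(1,4),(1,5),(1,6),(1,7),(2,3),(2,6),(2,7),(3,3),(3,4),(3,5),(3,7),(4,6),(4,7),(5,6),(5,7)]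
def fg26 : Fin 8 → Fin 8 → Fin 26 := ![![0,1,2,3,4,5,6,7],![1,8,9,10,11,12,13,14],![2,9,4,15,5,0,16,17],![3,10,15,18,19,20,14,21],![4,11,5,19,0,2,22,23],![5,12,0,20,2,4,24,25],![6,13,16,14,22,24,8,10],![7,14,17,21,23,25,10,18]]
def fk26 : List ℕ := [0,10688672,13721760,2480616,8536320,5448096,11606400,3659976,4333824,7371008,12902472,2185632,15874048,5251104,14082408,16169032,6453280,14989672,4923792,10983656,7665992,5841072,3364992,11901384,14694688,6748264]

theorem case_26 :
    ∃ M : Fin 8 → Fin 8 → EuclideanSpace ℂ (Fin 2 × Fin 2 × Fin 2),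
      IsQLSIdx M ∧ FamCardEq (fun p : Fin 8 × Fin 8 => M p.1 p.2) 26 :=
  master1' fA26 fB26 26 fr26 (fun p => fg26 p.1 p.2) fk26
    (by decide +kernel) (by decide +kernel) (by decide +kernel) (by decide +kernel) (by decide +kernel) (by decide +kernel)

def fA27 : Fin 8 → Fin 8 → ZMod 8 := ![![0,0,0,0,0,0,0,0],![0,1,3,4,6,5,7,2],![0,6,4,4,2,2,0,6],![0,7,4,0,3,7,4,3],![0,5,7,4,6,1,3,2],![0,3,4,0,7,3,4,7],![0,2,0,4,2,6,4,6],![0,4,0,0,4,4,0,4]]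
def fB27 : Fin 8 → Fin 8 → ZMod 8 := ![![0,0,0,0,0,0,0,0],![0,1,3,4,6,5,7,2],![0,6,4,4,2,2,0,6],![0,7,4,0,3,7,4,3],![0,5,7,4,6,1,3,2],![0,3,4,0,7,3,4,7],![0,2,0,4,2,6,4,6],![0,4,0,0,4,4,0,4]]
def fr27 : Fin 27 → Fin 8 × Fin 8 := ![(0,0),(0,1),(0,2),(0,3),(0,4),(0,5),(0,6),(0,7),(1,1),(1,2),(1,3),(1,4),(1,5),(1,6),(1,7),(2,3),(2,5),(2,6),(2,7),(3,3),(3,4),(3,5),(3,6),(4,5),(4,7),(5,6),(6,7)]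
def fg27 : Fin 8 → Fin 8 → Fin 27 := ![![0,1,2,3,4,5,6,7],![1,8,9,10,11,12,13,14],![2,9,7,15,13,16,17,18],![3,10,15,19,20,21,22,5],![4,11,13,20,8,23,9,24],![5,12,16,21,23,19,25,3],![6,13,17,22,9,25,7,26],![7,14,18,5,24,3,26,0]]
def fk27 : List ℕ := [0,6219976,12658992,7582008,5040616,15855896,13838352,8536096,10043792,2064888,11409856,9126064,2906592,884952,14461160,3201064,11704328,9453824,4417808,12804144,12327136,4268048,2283784,4085952,13543880,10524968,5335088]

theorem case_27 :
    ∃ M : Fin 8 → Fin 8 → EuclideanSpace ℂ (Fin 2 × Fin 2 × Fin 2),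
      IsQLSIdx M ∧ FamCardEq (fun p : Fin 8 × Fin 8 => M p.1 p.2) 27 :=
  master1' fA27 fB27 27 fr27 (fun p => fg27 p.1 p.2) fk27
    (by decide +kernel) (by decide +kernel) (by decide +kernel) (by decide +kernel) (by decide +kernel) (by decide +kernel)

def fA28 : Fin 8 → Fin 8 → ZMod 8 := ![![0,0,0,0,0,0,0,0],![0,5,4,0,1,1,5,4],![0,5,3,4,3,7,1,7],![0,1,4,0,5,5,1,4],![0,5,7,4,7,3,1,3],![0,1,4,4,0,4,5,0],![0,1,0,4,4,0,5,4],![0,4,0,0,4,4,4,0]]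
def fB28 : Fin 8 → Fin 8 → ZMod 8 := ![![0,0,0,0,0,0,0,0],![0,5,4,0,1,1,5,4],![0,5,3,4,3,7,1,7],![0,1,4,0,5,5,1,4],![0,5,7,4,7,3,1,3],![0,1,4,4,0,4,5,0],![0,1,0,4,4,0,5,4],![0,4,0,0,4,4,4,0]]
def fr28 : Fin 28 → Fin 8 × Fin 8 := ![(0,0),(0,1),(0,2),(0,3),(0,4),(0,5),(0,6),(0,7),(1,1),(1,2),(1,3),(1,4),(1,5),(1,6),(2,2),(2,3),(2,4),(2,5),(2,6),(2,7),(3,4),(3,5),(3,6),(4,7),(5,5),(5,6),(5,7),(6,7)]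
def fg28 : Fin 8 → Fin 8 → Fin 28 := ![![0,1,2,3,4,5,6,7],![1,8,9,10,11,12,13,3],![2,9,14,15,16,17,18,19],![3,10,15,8,20,21,22,1],![4,11,16,20,14,18,17,23],![5,12,17,21,18,24,25,26],![6,13,18,22,17,25,24,27],![7,3,19,1,23,26,27,0]]
def fk28 : List ℕ := [0,9736488,15186152,8835336,6683112,1444104,9717768,1196064,598032,7883216,1794096,16386256,9082928,579888,13328784,6949360,4792464,16364016,8122608,16120008,15223024,10016784,1743120,7846344,524304,9060624,280872,8783912]

theorem case_28 :
    ∃ M : Fin 8 → Fin 8 → EuclideanSpace ℂ (Fin 2 × Fin 2 × Fin 2),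
      IsQLSIdx M ∧ FamCardEq (fun p : Fin 8 × Fin 8 => M p.1 p.2) 28 :=
  master1' fA28 fB28 28 fr28 (fun p => fg28 p.1 p.2) fk28
    (by decide +kernel) (by decide +kernel) (by decide +kernel) (by decide +kernel) (by decide +kernel) (by decide +kernel)

def bA29 : Fin 2 → Fin 2 → Fin 4 → Fin 4 → ZMod 8 := ![![![![0,0,0,0],![0,0,4,4],![0,4,2,6],![0,4,6,2]],![![0,0,0,0],![0,0,4,4],![0,4,1,5],![0,4,5,1]]],![![![0,0,0,0],![0,1,4,5],![0,4,0,4],![0,5,4,1]],![![0,0,0,0],![0,2,4,6],![0,4,0,4],![0,6,4,2]]]]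
def bB29 : Fin 2 → Fin 2 → Fin 4 → Fin 4 → ZMod 8 := ![![![![0,0,0,0],![0,0,4,4],![0,4,2,6],![0,4,6,2]],![![0,0,0,0],![0,0,4,4],![0,4,2,6],![0,4,6,2]]],![![![0,0,0,0],![0,1,5,4],![0,4,4,0],![0,5,1,4]],![![0,0,0,0],![0,2,4,6],![0,4,0,4],![0,6,4,2]]]]
def br29 : Fin 29 → Fin 8 × Fin 8 := ![(0,0),(0,1),(0,2),(0,3),(0,4),(0,5),(0,6),(0,7),(2,4),(2,5),(2,6),(2,7),(4,1),(4,2),(4,3),(4,5),(4,6),(4,7),(5,0),(5,1),(5,2),(5,3),(6,0),(6,1),(6,3),(7,0),(7,1),(7,2),(7,3)]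
def bg29 : Fin 8 → Fin 8 → Fin 29 := ![![0,1,2,3,4,5,6,7],![1,0,3,2,5,4,7,6],![2,3,1,0,8,9,10,11],![3,2,0,1,9,8,11,10],![4,12,13,14,0,15,16,17],![18,19,20,21,15,16,17,0],![22,23,5,24,16,17,0,15],![25,26,27,28,17,0,15,16]]
def bk29 : List ℕ := [0,4608,6464,2880,1,4609,6465,2881,5313,1729,3457,8065,4753,577,4305,6688,4160,2656,5649,1185,5201,1761,4161,721,145,1617,5345,1041,5793]

theorem case_29 :
    ∃ M : Fin 8 → Fin 8 → EuclideanSpace ℂ (Fin 2 × Fin 2 × Fin 2),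
      IsQLSIdx M ∧ FamCardEq (fun p : Fin 8 × Fin 8 => M p.1 p.2) 29 :=
  master2' bA29 bB29 29 br29 (fun p => bg29 p.1 p.2) bk29
    (by decide +kernel) (by decide +kernel) (by decide +kernel) (by decide +kernel) (by decide +kernel) (by decide +kernel)

def fA30 : Fin 8 → Fin 8 → ZMod 8 := ![![0,0,0,0,0,0,0,0],![0,6,5,7,2,3,4,1],![0,2,6,4,0,2,6,4],![0,4,2,2,6,4,6,0],![0,6,1,3,2,7,4,5],![0,2,6,4,4,6,2,0],![0,0,2,6,6,4,2,4],![0,4,4,0,4,0,0,4]]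
def fB30 : Fin 8 → Fin 8 → ZMod 8 := ![![0,0,0,0,0,0,0,0],![0,6,5,7,2,3,4,1],![0,2,6,4,0,2,6,4],![0,4,2,2,6,4,6,0],![0,6,1,3,2,7,4,5],![0,2,6,4,4,6,2,0],![0,0,2,6,6,4,2,4],![0,4,4,0,4,0,0,4]]
def fr30 : Fin 30 → Fin 8 × Fin 8 := ![(0,0),(0,1),(0,2),(0,3),(0,4),(0,5),(0,6),(0,7),(1,1),(1,2),(1,3),(1,4),(1,5),(1,6),(1,7),(2,2),(2,3),(2,4),(2,6),(2,7),(3,3),(3,4),(3,5),(3,7),(4,5),(4,6),(4,7),(5,6),(5,7),(6,7)]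
def fg30 : Fin 8 → Fin 8 → Fin 30 := ![![0,1,2,3,4,5,6,7],![1,8,9,10,11,12,13,14],![2,9,15,16,17,7,18,19],![3,10,16,20,21,22,7,23],![4,11,17,21,8,24,25,26],![5,12,7,22,24,15,27,28],![6,13,18,7,25,27,20,29],![7,14,19,23,26,28,29,0]]
def fk30 : List ℕ := [0,3256176,10029456,1729696,11773552,739728,9071744,8405280,4410528,11183808,2851792,12666272,3729088,12291056,11660880,1179936,9661488,2666432,222224,1657008,1067264,11111120,76848,10102144,12251072,3769072,3401552,9511952,9111728,667040]

theorem case_30 :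
    ∃ M : Fin 8 → Fin 8 → EuclideanSpace ℂ (Fin 2 × Fin 2 × Fin 2),
      IsQLSIdx M ∧ FamCardEq (fun p : Fin 8 × Fin 8 => M p.1 p.2) 30 :=
  master1' fA30 fB30 30 fr30 (fun p => fg30 p.1 p.2) fk30
    (by decide +kernel) (by decide +kernel) (by decide +kernel) (by decide +kernel) (by decide +kernel) (by decide +kernel)

def fA31 : Fin 8 → Fin 8 → ZMod 8 := ![![0,0,0,0,0,0,0,0],![0,5,7,0,4,4,1,3],![0,4,5,3,6,1,2,7],![0,4,3,7,0,7,4,3],![0,1,7,4,4,0,5,3],![0,4,1,3,2,5,6,7],![0,0,3,7,4,3,4,7],![0,0,4,4,0,4,0,4]]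
def fB31 : Fin 8 → Fin 8 → ZMod 8 := ![![0,0,0,0,0,0,0,0],![0,5,7,0,4,4,1,3],![0,4,5,3,6,1,2,7],![0,4,3,7,0,7,4,3],![0,1,7,4,4,0,5,3],![0,4,1,3,2,5,6,7],![0,0,3,7,4,3,4,7],![0,0,4,4,0,4,0,4]]
def fr31 : Fin 31 → Fin 8 × Fin 8 := ![(0,0),(0,1),(0,2),(0,3),(0,4),(0,5),(0,6),(0,7),(1,1),(1,2),(1,3),(1,4),(1,5),(1,6),(1,7),(2,2),(2,3),(2,4),(2,5),(2,6),(2,7),(3,4),(3,5),(3,6),(3,7),(4,5),(4,6),(4,7),(5,6),(5,7),(6,7)]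
def fg31 : Fin 8 → Fin 8 → Fin 31 := ![![0,1,2,3,4,5,6,7],![1,8,9,10,11,12,13,14],![2,9,15,16,17,18,19,20],![3,10,16,18,21,22,23,24],![4,11,17,21,8,25,26,27],![5,12,18,22,25,15,28,29],![6,13,19,23,26,28,18,30],![7,14,20,24,27,29,30,0]]
def fk31 : List ℕ := [0,6701544,15263584,7573216,7621064,16426592,15847104,8521984,13107600,5154568,14012040,14289328,6088200,5738152,14960872,13716608,5792768,6074152,12782976,14296096,7007840,13092520,4859136,4279712,15828960,5172776,4556424,16138440,13133088,7909216,7587776]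

theorem case_31 :
    ∃ M : Fin 8 → Fin 8 → EuclideanSpace ℂ (Fin 2 × Fin 2 × Fin 2),
      IsQLSIdx M ∧ FamCardEq (fun p : Fin 8 × Fin 8 => M p.1 p.2) 31 :=
  master1' fA31 fB31 31 fr31 (fun p => fg31 p.1 p.2) fk31
    (by decide +kernel) (by decide +kernel) (by decide +kernel) (by decide +kernel) (by decide +kernel) (by decide +kernel)

def fA32 : Fin 8 → Fin 8 → ZMod 8 := ![![0,0,0,0,0,0,0,0],![0,0,4,4,0,6,4,2],![0,7,5,3,4,1,1,5],![0,1,1,1,4,5,5,5],![0,5,1,5,4,1,5,1],![0,4,0,4,0,4,0,4],![0,4,4,0,0,2,4,6],![0,3,5,7,4,5,1,1]]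
def fB32 : Fin 8 → Fin 8 → ZMod 8 := ![![0,0,0,0,0,0,0,0],![0,4,5,0,4,0,1,4],![0,5,1,2,4,6,5,1],![0,1,1,6,4,2,5,5],![0,3,4,4,0,0,4,7],![0,7,4,0,0,4,4,3],![0,0,5,4,4,4,1,0],![0,4,0,4,0,4,0,4]]
def fr32 : Fin 32 → Fin 8 × Fin 8 := ![(0,0),(0,1),(0,2),(0,3),(0,4),(0,5),(0,6),(0,7),(1,0),(1,1),(1,2),(1,3),(1,4),(1,5),(1,6),(1,7),(2,0),(2,1),(2,2),(2,3),(2,4),(2,5),(2,6),(2,7),(3,0),(3,1),(3,2),(3,3),(3,4),(3,5),(3,6),(3,7)]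
def fg32 : Fin 8 → Fin 8 → Fin 32 := ![![0,1,2,3,4,5,6,7],![8,9,10,11,12,13,14,15],![16,17,18,19,20,21,22,23],![24,25,26,27,28,29,30,31],![31,30,27,26,29,28,25,24],![7,6,3,2,5,4,1,0],![15,14,11,10,13,12,9,8],![23,22,19,18,21,20,17,16]]
def fk32 : List ℕ := [0,8667488,3621992,11881544,15730968,7471416,411968,8521760,5441792,14108768,6704488,14959944,2293784,10553400,5587008,13697312,10798968,2655896,14388128,5866368,9752144,1492592,11177656,2543448,11977288,3834792,13207216,4951696,8833888,312128,12094344,3459688]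

theorem case_32 :
    ∃ M : Fin 8 → Fin 8 → EuclideanSpace ℂ (Fin 2 × Fin 2 × Fin 2),
      IsQLSIdx M ∧ FamCardEq (fun p : Fin 8 × Fin 8 => M p.1 p.2) 32 :=
  master1' fA32 fB32 32 fr32 (fun p => fg32 p.1 p.2) fk32
    (by decide +kernel) (by decide +kernel) (by decide +kernel) (by decide +kernel) (by decide +kernel) (by decide +kernel)

def fA33 : Fin 8 → Fin 8 → ZMod 8 := ![![0,0,0,0,0,0,0,0],![0,7,3,4,5,4,0,1],![0,1,7,3,2,5,6,4],![0,6,4,1,3,7,2,5],![0,2,2,0,6,4,4,6],![0,5,1,4,7,0,4,3],![0,3,5,7,4,1,6,2],![0,4,6,5,1,3,2,7]]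
def fB33 : Fin 8 → Fin 8 → ZMod 8 := ![![0,0,0,0,0,0,0,0],![0,7,3,4,5,4,0,1],![0,1,7,3,2,5,6,4],![0,6,4,1,3,7,2,5],![0,2,2,0,6,4,4,6],![0,5,1,4,7,0,4,3],![0,3,5,7,4,1,6,2],![0,4,6,5,1,3,2,7]]
def fr33 : Fin 33 → Fin 8 × Fin 8 := ![(0,0),(0,1),(0,2),(0,3),(0,4),(0,5),(0,6),(0,7),(1,1),(1,2),(1,3),(1,4),(1,5),(1,6),(1,7),(2,2),(2,4),(2,5),(2,6),(2,7),(3,3),(3,4),(3,5),(3,6),(3,7),(4,4),(4,6),(4,7),(5,5),(5,6),(5,7),(6,6),(7,7)]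
def fg33 : Fin 8 → Fin 8 → Fin 33 := ![![0,1,2,3,4,5,6,7],![1,8,9,10,11,12,13,14],![2,9,15,1,16,17,18,19],![3,10,1,20,21,22,23,24],![4,11,16,21,25,1,26,27],![5,12,17,22,1,28,29,30],![6,13,18,23,26,29,31,1],![7,14,19,24,27,30,1,32]]
def fk33 : List ℕ := [0,2251000,10135496,11252528,13787280,7370856,5820248,15309728,4202928,12123776,13208552,15743304,9584928,8033808,778840,1133968,4752984,15375920,13853984,6304104,5465120,7967616,1813336,14708808,9522320,8405280,700392,12319280,12607632,11057024,5866440,9505968,13837568]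

theorem case_33 :
    ∃ M : Fin 8 → Fin 8 → EuclideanSpace ℂ (Fin 2 × Fin 2 × Fin 2),
      IsQLSIdx M ∧ FamCardEq (fun p : Fin 8 × Fin 8 => M p.1 p.2) 33 :=
  master1' fA33 fB33 33 fr33 (fun p => fg33 p.1 p.2) fk33
    (by decide +kernel) (by decide +kernel) (by decide +kernel) (by decide +kernel) (by decide +kernel) (by decide +kernel)

def bA34 : Fin 2 → Fin 2 → Fin 4 → Fin 4 → ZMod 8 := ![![![![0,0,0,0],![0,0,4,4],![0,4,0,4],![0,4,4,0]],![![0,0,0,0],![0,0,4,4],![0,4,1,5],![0,4,5,1]]],![![![0,0,0,0],![0,0,4,4],![0,4,2,6],![0,4,6,2]],![![0,0,0,0],![0,0,4,4],![0,4,2,6],![0,4,6,2]]]]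
def bB34 : Fin 2 → Fin 2 → Fin 4 → Fin 4 → ZMod 8 := ![![![![0,0,0,0],![0,0,4,4],![0,4,0,4],![0,4,4,0]],![![0,0,0,0],![0,1,4,5],![0,4,0,4],![0,5,4,1]]],![![![0,0,0,0],![0,1,5,4],![0,4,4,0],![0,5,1,4]],![![0,0,0,0],![0,0,4,4],![0,4,2,6],![0,4,6,2]]]]
def br34 : Fin 34 → Fin 8 × Fin 8 := ![(0,0),(0,1),(0,2),(0,3),(0,4),(0,5),(0,6),(0,7),(1,4),(1,5),(1,6),(1,7),(2,4),(2,5),(2,6),(2,7),(3,4),(3,5),(3,6),(3,7),(4,1),(4,3),(4,6),(4,7),(5,1),(5,3),(6,0),(6,1),(6,2),(6,3),(7,0),(7,1),(7,2),(7,3)]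
def bg34 : Fin 8 → Fin 8 → Fin 34 := ![![0,1,2,3,4,5,6,7],![1,0,3,2,8,9,10,11],![2,3,0,1,12,13,14,15],![3,2,1,0,16,17,18,19],![4,20,10,21,0,1,22,23],![8,24,6,25,1,0,23,22],![26,27,28,29,22,23,1,0],![30,31,32,33,23,22,0,1]]
def bk34 : List ℕ := [0,4608,4160,576,1,5649,4161,1617,4609,1041,577,5201,5313,2769,1153,6801,1729,6353,5761,2193,4753,4305,6464,2880,145,721,6465,3025,6913,2449,2881,6609,2305,7057]

theorem case_34 :
    ∃ M : Fin 8 → Fin 8 → EuclideanSpace ℂ (Fin 2 × Fin 2 × Fin 2),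
      IsQLSIdx M ∧ FamCardEq (fun p : Fin 8 × Fin 8 => M p.1 p.2) 34 :=
  master2' bA34 bB34 34 br34 (fun p => bg34 p.1 p.2) bk34
    (by decide +kernel) (by decide +kernel) (by decide +kernel) (by decide +kernel) (by decide +kernel) (by decide +kernel)

def fA35 : Fin 8 → Fin 8 → ZMod 8 := ![![0,0,0,0,0,0,0,0],![0,1,3,4,6,5,7,2],![0,6,4,4,2,2,0,6],![0,7,4,0,3,7,4,3],![0,5,7,4,6,1,3,2],![0,3,4,0,7,3,4,7],![0,2,0,4,2,6,4,6],![0,4,0,0,4,4,0,4]]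
def fB35 : Fin 8 → Fin 8 → ZMod 8 := ![![0,0,0,0,0,0,0,0],![0,1,3,4,6,5,7,2],![0,6,4,4,2,2,0,6],![0,5,4,0,1,5,4,1],![0,2,0,4,2,6,4,6],![0,4,0,0,4,4,0,4],![0,1,4,0,5,1,4,5],![0,5,7,4,6,1,3,2]]
def fr35 : Fin 35 → Fin 8 × Fin 8 := ![(0,0),(0,1),(0,2),(0,3),(0,4),(0,5),(0,6),(0,7),(1,1),(1,2),(1,3),(1,4),(1,5),(1,6),(1,7),(2,3),(2,4),(2,5),(2,6),(3,0),(3,1),(3,2),(3,4),(3,5),(3,7),(4,3),(4,5),(4,6),(5,1),(5,2),(5,4),(5,7),(6,3),(6,5),(6,6)]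
def fg35 : Fin 8 → Fin 8 → Fin 35 := ![![0,1,2,3,4,5,6,7],![1,8,9,10,11,12,13,14],![2,9,5,15,16,17,18,11],![19,20,21,5,22,23,0,24],![7,14,11,25,9,26,27,8],![23,28,29,0,30,19,5,31],![4,11,16,32,5,33,34,9],![5,12,17,6,33,0,3,26]]
def fk35 : List ℕ := [0,6219976,12658992,3313960,13838352,8536096,11587848,5040616,10043792,2064888,7174640,884952,14461160,15677904,9126064,15972376,9453824,4417808,7469112,7582008,11409856,3201064,2283784,15855896,12327136,8354000,13543880,16595184,2906592,11704328,10524968,4085952,14793016,5335088,6551832]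

theorem case_35 :
    ∃ M : Fin 8 → Fin 8 → EuclideanSpace ℂ (Fin 2 × Fin 2 × Fin 2),
      IsQLSIdx M ∧ FamCardEq (fun p : Fin 8 × Fin 8 => M p.1 p.2) 35 :=
  master1' fA35 fB35 35 fr35 (fun p => fg35 p.1 p.2) fk35
    (by decide +kernel) (by decide +kernel) (by decide +kernel) (by decide +kernel) (by decide +kernel) (by decide +kernel)

def fA36 : Fin 8 → Fin 8 → ZMod 8 := ![![0,0,0,0,0,0,0,0],![0,6,6,3,2,4,2,7],![0,7,2,3,7,4,6,3],![0,7,3,7,3,1,4,5],![0,3,4,4,7,0,4,0],![0,3,7,2,3,7,6,4],![0,2,7,6,6,3,2,4],![0,4,3,7,4,5,0,1]]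
def fB36 : Fin 8 → Fin 8 → ZMod 8 := ![![0,0,0,0,0,0,0,0],![0,6,6,3,2,4,2,7],![0,7,2,3,7,4,6,3],![0,7,3,7,3,1,4,5],![0,3,4,4,7,0,4,0],![0,3,7,2,3,7,6,4],![0,2,7,6,6,3,2,4],![0,4,3,7,4,5,0,1]]
def fr36 : Fin 36 → Fin 8 × Fin 8 := ![(0,0),(0,1),(0,2),(0,3),(0,4),(0,5),(0,6),(0,7),(1,1),(1,2),(1,3),(1,4),(1,5),(1,6),(1,7),(2,2),(2,3),(2,4),(2,5),(2,6),(2,7),(3,3),(3,4),(3,5),(3,6),(3,7),(4,4),(4,5),(4,6),(4,7),(5,5),(5,6),(5,7),(6,6),(6,7),(7,7)]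
def fg36 : Fin 8 → Fin 8 → Fin 36 := ![![0,1,2,3,4,5,6,7],![1,8,9,10,11,12,13,14],![2,9,15,16,17,18,19,20],![3,10,16,21,22,23,24,25],![4,11,17,22,26,27,28,29],![5,12,18,23,27,30,31,32],![6,13,19,24,28,31,33,34],![7,14,20,25,29,32,34,35]]
def fk36 : List ℕ := [0,15345584,8025784,11583224,1079576,10204632,9039312,2281184,13651232,4201512,10146920,16391816,6413128,7570240,582736,13659440,697712,6975376,15837776,14930504,10007896,4287920,10528720,2646672,3807880,13860248,24624,9153776,10081512,3323896,1272240,70056,12219064,1264032,11020976,4263296]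

theorem case_36 :
    ∃ M : Fin 8 → Fin 8 → EuclideanSpace ℂ (Fin 2 × Fin 2 × Fin 2),
      IsQLSIdx M ∧ FamCardEq (fun p : Fin 8 × Fin 8 => M p.1 p.2) 36 :=
  master1' fA36 fB36 36 fr36 (fun p => fg36 p.1 p.2) fk36
    (by decide +kernel) (by decide +kernel) (by decide +kernel) (by decide +kernel) (by decide +kernel) (by decide +kernel)

def bA37 : Fin 2 → Fin 2 → Fin 4 → Fin 4 → ZMod 8 := ![![![![0,0,0,0],![0,0,4,4],![0,4,1,5],![0,4,5,1]],![![0,0,0,0],![0,0,4,4],![0,4,1,5],![0,4,5,1]]],![![![0,0,0,0],![0,0,4,4],![0,4,2,6],![0,4,6,2]],![![0,0,0,0],![0,2,4,6],![0,4,0,4],![0,6,4,2]]]]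
def bB37 : Fin 2 → Fin 2 → Fin 4 → Fin 4 → ZMod 8 := ![![![![0,0,0,0],![0,0,4,4],![0,4,1,5],![0,4,5,1]],![![0,0,0,0],![0,1,4,5],![0,4,0,4],![0,5,4,1]]],![![![0,0,0,0],![0,1,5,4],![0,4,4,0],![0,5,1,4]],![![0,0,0,0],![0,2,4,6],![0,4,0,4],![0,6,4,2]]]]
def br37 : Fin 37 → Fin 8 × Fin 8 := ![(0,0),(0,1),(0,2),(0,3),(0,4),(0,5),(0,6),(0,7),(1,4),(1,5),(1,6),(1,7),(2,2),(2,3),(2,4),(2,5),(2,6),(2,7),(3,4),(3,5),(3,6),(3,7),(4,1),(4,3),(4,5),(4,6),(4,7),(5,1),(5,3),(6,0),(6,1),(6,2),(6,3),(7,0),(7,1),(7,2),(7,3)]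
def bg37 : Fin 8 → Fin 8 → Fin 37 := ![![0,1,2,3,4,5,6,7],![1,0,3,2,8,9,10,11],![2,3,12,13,14,15,16,17],![3,2,13,12,18,19,20,21],![4,22,10,23,0,24,25,26],![8,27,6,28,24,25,26,0],![29,30,31,32,25,26,0,24],![33,34,35,36,26,0,24,25]]
def bk37 : List ℕ := [0,4608,5312,1728,1,5649,4161,1617,4609,1041,577,5201,2304,6912,5313,2769,1153,6801,1729,6353,5761,2193,4753,4305,6688,4160,2656,145,721,6465,3025,6913,2449,2881,6609,2305,7057]

theorem case_37 :
    ∃ M : Fin 8 → Fin 8 → EuclideanSpace ℂ (Fin 2 × Fin 2 × Fin 2),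
      IsQLSIdx M ∧ FamCardEq (fun p : Fin 8 × Fin 8 => M p.1 p.2) 37 :=
  master2' bA37 bB37 37 br37 (fun p => bg37 p.1 p.2) bk37
    (by decide +kernel) (by decide +kernel) (by decide +kernel) (by decide +kernel) (by decide +kernel) (by decide +kernel)

def fA38 : Fin 8 → Fin 8 → ZMod 8 := ![![0,0,0,0,0,0,0,0],![0,1,7,5,6,3,4,2],![0,5,1,5,4,1,0,4],![0,5,3,1,6,7,4,2],![0,6,0,2,2,4,4,6],![0,1,5,1,4,5,0,4],![0,2,4,6,2,0,4,6],![0,4,4,4,0,4,0,0]]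
def fB38 : Fin 8 → Fin 8 → ZMod 8 := ![![0,0,0,0,0,0,0,0],![1,0,2,4,3,6,5,7],![6,0,6,4,4,2,2,0],![7,0,3,0,4,3,7,4],![5,0,2,4,7,6,1,3],![3,0,7,0,4,7,3,4],![2,0,6,4,0,2,6,4],![4,0,4,0,0,4,4,0]]
def fr38 : Fin 38 → Fin 8 × Fin 8 := ![(0,0),(0,1),(0,2),(0,3),(0,4),(0,5),(0,6),(0,7),(1,0),(1,2),(1,3),(1,4),(1,5),(1,6),(1,7),(2,0),(2,1),(2,3),(2,4),(2,5),(2,7),(3,0),(3,3),(3,5),(3,7),(4,0),(4,3),(4,4),(4,5),(5,3),(5,5),(5,7),(6,0),(6,3),(6,5),(7,3),(7,5),(7,7)]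
def fg38 : Fin 8 → Fin 8 → Fin 38 := ![![0,1,2,3,4,5,6,7],![8,0,9,10,11,12,13,14],![15,16,1,17,18,19,4,20],![21,11,13,22,0,23,9,24],![25,15,0,26,27,28,11,2],![27,18,4,29,16,30,1,31],![32,27,11,33,15,34,0,6],![11,4,6,35,1,36,2,37]]
def fk38 : List ℕ := [0,13805176,5401616,10638088,13676376,2235176,5268784,8407072,5368776,8636376,15973584,133408,7599344,8507128,13738984,8440424,5464224,2268528,5335424,10671440,33352,5497576,15840752,7470544,13871816,13771824,7370552,8569672,15744792,2135120,10542192,166760,13643024,7503384,15873592,10508840,2101768,8536320]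

theorem case_38 :
    ∃ M : Fin 8 → Fin 8 → EuclideanSpace ℂ (Fin 2 × Fin 2 × Fin 2),
      IsQLSIdx M ∧ FamCardEq (fun p : Fin 8 × Fin 8 => M p.1 p.2) 38 :=
  master1' fA38 fB38 38 fr38 (fun p => fg38 p.1 p.2) fk38
    (by decide +kernel) (by decide +kernel) (by decide +kernel) (by decide +kernel) (by decide +kernel) (by decide +kernel)

def bA39 : Fin 2 → Fin 2 → Fin 4 → Fin 4 → ZMod 8 := ![![![![0,0,0,0],![0,0,4,4],![0,4,1,5],![0,4,5,1]],![![0,0,0,0],![0,0,4,4],![0,4,1,5],![0,4,5,1]]],![![![0,0,0,0],![0,0,4,4],![0,4,2,6],![0,4,6,2]],![![0,0,0,0],![0,1,4,5],![0,4,0,4],![0,5,4,1]]]]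
def bB39 : Fin 2 → Fin 2 → Fin 4 → Fin 4 → ZMod 8 := ![![![![0,0,0,0],![0,0,4,4],![0,4,1,5],![0,4,5,1]],![![0,0,0,0],![0,1,4,5],![0,4,0,4],![0,5,4,1]]],![![![0,0,0,0],![0,1,5,4],![0,4,4,0],![0,5,1,4]],![![0,0,0,0],![0,1,4,5],![0,4,0,4],![0,5,4,1]]]]
def br39 : Fin 39 → Fin 8 × Fin 8 := ![(0,0),(0,1),(0,2),(0,3),(0,4),(0,5),(0,6),(0,7),(1,4),(1,5),(1,6),(1,7),(2,2),(2,3),(2,4),(2,5),(2,6),(2,7),(3,4),(3,5),(3,6),(3,7),(4,1),(4,3),(4,5),(4,6),(4,7),(5,1),(5,3),(5,5),(5,7),(6,0),(6,1),(6,2),(6,3),(7,0),(7,1),(7,2),(7,3)]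
def bg39 : Fin 8 → Fin 8 → Fin 39 := ![![0,1,2,3,4,5,6,7],![1,0,3,2,8,9,10,11],![2,3,12,13,14,15,16,17],![3,2,13,12,18,19,20,21],![4,22,10,23,0,24,25,26],![8,27,6,28,24,29,26,30],![31,32,33,34,25,26,0,24],![35,36,37,38,26,30,24,29]]
def bk39 : List ℕ := [0,4608,5312,1728,1,5649,4161,1617,4609,1041,577,5201,2304,6912,5313,2769,1153,6801,1729,6353,5761,2193,4753,4305,5648,4160,1616,145,721,2080,6240,6465,3025,6913,2449,2881,6609,2305,7057]

theorem case_39 :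
    ∃ M : Fin 8 → Fin 8 → EuclideanSpace ℂ (Fin 2 × Fin 2 × Fin 2),
      IsQLSIdx M ∧ FamCardEq (fun p : Fin 8 × Fin 8 => M p.1 p.2) 39 :=
  master2' bA39 bB39 39 br39 (fun p => bg39 p.1 p.2) bk39
    (by decide +kernel) (by decide +kernel) (by decide +kernel) (by decide +kernel) (by decide +kernel) (by decide +kernel)

def fA40 : Fin 8 → Fin 8 → ZMod 8 := ![![0,0,0,0,0,0,0,0],![0,0,5,1,4,6,2,4],![0,4,1,5,0,6,2,4],![0,4,7,7,4,3,3,0],![0,0,4,4,0,4,4,0],![0,6,7,3,2,2,6,4],![0,4,3,3,4,7,7,0],![0,2,3,7,6,2,6,4]]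
def fB40 : Fin 8 → Fin 8 → ZMod 8 := ![![0,0,0,0,0,0,0,0],![1,2,0,4,6,7,3,5],![2,4,0,0,4,6,6,2],![3,6,0,4,2,5,1,7],![4,0,0,0,0,4,4,4],![5,2,0,4,6,3,7,1],![6,4,0,0,4,2,2,6],![7,6,0,4,2,1,5,3]]
def fr40 : Fin 40 → Fin 8 × Fin 8 := ![(0,0),(0,1),(0,2),(0,3),(0,4),(0,5),(0,6),(0,7),(1,0),(1,1),(1,2),(1,3),(1,4),(1,5),(1,6),(1,7),(3,0),(3,1),(3,2),(3,3),(3,4),(3,5),(3,6),(3,7),(4,0),(4,1),(4,2),(4,3),(4,4),(4,5),(4,6),(4,7),(6,0),(6,1),(6,2),(6,3),(6,4),(6,5),(6,6),(6,7)]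
def fg40 : Fin 8 → Fin 8 → Fin 40 := ![![0,1,2,3,4,5,6,7],![8,9,10,11,12,13,14,15],![12,13,14,15,8,9,10,11],![16,17,18,19,20,21,22,23],![24,25,26,27,28,29,30,31],![14,15,8,9,10,11,12,13],![32,33,34,35,36,37,38,39],![10,11,12,13,14,15,8,9]]
def fk40 : List ℕ := [0,9131976,1191312,10056536,18720,9117416,1205424,10041976,9126720,1186056,10055376,13464,9112160,1200168,10037232,32184,905184,9737640,2091888,8827192,886464,9755784,2073168,8845336,1181952,10051272,9360,9140824,1196064,10033128,28080,9122680,2082528,8821928,909936,9746488,2068416,8836488,895824,9761048]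

theorem case_40 :
    ∃ M : Fin 8 → Fin 8 → EuclideanSpace ℂ (Fin 2 × Fin 2 × Fin 2),
      IsQLSIdx M ∧ FamCardEq (fun p : Fin 8 × Fin 8 => M p.1 p.2) 40 :=
  master1' fA40 fB40 40 fr40 (fun p => fg40 p.1 p.2) fk40
    (by decide +kernel) (by decide +kernel) (by decide +kernel) (by decide +kernel) (by decide +kernel) (by decide +kernel)

def fA41 : Fin 8 → Fin 8 → ZMod 8 := ![![0,0,0,0,0,0,0,0],![0,5,3,6,1,4,2,7],![0,4,0,4,2,6,6,2],![0,0,2,2,4,4,6,6],![0,0,4,4,0,0,4,4],![0,4,6,2,4,0,2,6],![0,4,4,0,6,2,6,2],![0,1,7,6,5,4,2,3]]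
def fB41 : Fin 8 → Fin 8 → ZMod 8 := ![![0,0,0,0,0,0,0,0],![5,0,6,3,4,1,7,2],![4,0,4,0,6,2,2,6],![0,0,2,2,4,4,6,6],![0,0,4,4,0,0,4,4],![4,0,2,6,0,4,6,2],![4,0,0,4,2,6,2,6],![1,0,6,7,4,5,3,2]]
def fr41 : Fin 41 → Fin 8 × Fin 8 := ![(0,0),(0,1),(0,2),(0,3),(0,4),(0,5),(0,6),(0,7),(1,0),(1,2),(1,3),(1,4),(1,5),(1,6),(1,7),(2,1),(2,2),(2,3),(2,4),(2,5),(2,7),(3,1),(3,4),(3,5),(3,6),(3,7),(4,1),(4,5),(4,6),(4,7),(5,1),(5,6),(5,7),(6,1),(6,7),(7,0),(7,2),(7,3),(7,4),(7,5),(7,6)]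
def fg41 : Fin 8 → Fin 8 → Fin 41 := ![![0,1,2,3,4,5,6,7],![8,4,9,10,11,12,13,14],![2,15,16,17,18,19,4,20],![3,21,17,4,22,23,24,25],![4,26,18,22,0,27,28,29],![5,30,19,23,27,4,31,32],![6,33,4,24,28,31,16,34],![35,14,36,37,38,39,40,4]]
def fk41 : List ℕ := [0,11172952,5974048,14304384,9439488,13125024,5857568,2768248,15342824,2176200,10506600,8001000,11685960,2325960,1067040,14750840,9584640,1141920,13312288,224640,6378840,6303960,4869504,8521760,1254816,14709240,3831128,5786784,13199392,12203128,7483896,74880,15888600,14900600,6495320,6970824,10581480,2101320,16405704,3281256,10697960]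

theorem case_41 :
    ∃ M : Fin 8 → Fin 8 → EuclideanSpace ℂ (Fin 2 × Fin 2 × Fin 2),
      IsQLSIdx M ∧ FamCardEq (fun p : Fin 8 × Fin 8 => M p.1 p.2) 41 :=
  master1' fA41 fB41 41 fr41 (fun p => fg41 p.1 p.2) fk41
    (by decide +kernel) (by decide +kernel) (by decide +kernel) (by decide +kernel) (by decide +kernel) (by decide +kernel)

def fA42 : Fin 8 → Fin 8 → ZMod 8 := ![![0,0,0,0,0,0,0,0],![0,1,5,5,1,4,7,3],![0,7,1,1,3,4,5,5],![0,5,3,7,5,4,1,1],![0,3,7,3,7,4,3,7],![0,4,6,2,4,0,6,2],![0,6,4,4,2,0,2,6],![0,2,2,6,6,0,4,4]]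
def fB42 : Fin 8 → Fin 8 → ZMod 8 := ![![0,0,0,0,0,0,0,0],![4,1,5,5,1,0,7,3],![4,7,1,1,3,0,5,5],![4,5,7,3,5,0,1,1],![4,3,3,7,7,0,3,7],![0,4,2,6,4,0,6,2],![0,6,4,4,2,0,2,6],![0,2,6,2,6,0,4,4]]
def fr42 : Fin 42 → Fin 8 × Fin 8 := ![(0,0),(0,1),(0,2),(0,3),(0,4),(0,5),(0,6),(0,7),(1,0),(1,1),(1,2),(1,3),(1,4),(1,5),(1,6),(1,7),(2,0),(2,2),(2,3),(2,4),(2,6),(2,7),(3,0),(3,1),(3,2),(3,3),(3,6),(4,1),(4,2),(4,4),(5,0),(5,2),(5,4),(5,5),(5,6),(6,2),(6,5),(6,6),(6,7),(7,0),(7,6),(7,7)]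
def fg42 : Fin 8 → Fin 8 → Fin 42 := ![![0,1,2,3,4,5,6,7],![8,9,10,11,12,13,14,15],![16,10,17,18,19,15,20,21],![22,23,24,25,10,8,26,16],![26,27,28,10,29,14,3,20],![30,21,31,1,32,33,34,6],![6,32,35,4,22,36,37,38],![39,31,13,2,35,6,40,41]]
def fk42 : List ℕ := [0,15618664,2521944,11935432,8271864,5786784,13117744,9463184,8264520,4746672,8389792,1058832,14172416,11950056,2503288,15630040,11940472,14167440,4735232,1075248,8280936,2496456,2514664,1057040,4737024,14183856,15628248,14174208,1073456,4730256,5784992,8273656,11959128,9437184,27792,15602248,26000,9453600,5770368,9464976,5768576,16416]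

theorem case_42 :
    ∃ M : Fin 8 → Fin 8 → EuclideanSpace ℂ (Fin 2 × Fin 2 × Fin 2),
      IsQLSIdx M ∧ FamCardEq (fun p : Fin 8 × Fin 8 => M p.1 p.2) 42 :=
  master1' fA42 fB42 42 fr42 (fun p => fg42 p.1 p.2) fk42
    (by decide +kernel) (by decide +kernel) (by decide +kernel) (by decide +kernel) (by decide +kernel) (by decide +kernel)

def fA43 : Fin 8 → Fin 8 → ZMod 8 := ![![0,0,0,0,0,0,0,0],![0,3,2,4,3,7,6,7],![0,6,3,2,7,1,5,4],![0,4,7,3,6,3,2,7],![0,0,4,0,4,4,4,0],![0,2,3,6,7,5,1,4],![0,4,7,7,2,3,6,3],![0,7,6,4,3,7,2,3]]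
def fB43 : Fin 8 → Fin 8 → ZMod 8 := ![![0,0,0,0,0,0,0,0],![0,3,2,4,3,7,6,7],![0,6,3,2,7,1,5,4],![0,7,6,4,3,7,2,3],![0,4,7,5,0,3,4,1],![0,0,4,0,4,4,4,0],![0,2,3,6,7,5,1,4],![0,4,7,1,4,3,0,5]]
def fr43 : Fin 43 → Fin 8 × Fin 8 := ![(0,0),(0,1),(0,2),(0,3),(0,4),(0,5),(0,6),(0,7),(1,1),(1,2),(1,3),(1,4),(1,5),(1,6),(1,7),(2,2),(2,3),(2,4),(2,5),(2,6),(2,7),(3,0),(3,1),(3,2),(3,3),(3,5),(3,6),(3,7),(4,3),(4,4),(4,6),(4,7),(5,3),(5,4),(5,7),(6,0),(6,1),(6,2),(6,3),(6,5),(6,6),(7,4),(7,7)]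
def fg43 : Fin 8 → Fin 8 → Fin 43 := ![![0,1,2,3,4,5,6,7],![1,8,9,10,11,12,13,14],![2,9,15,16,17,18,19,20],![21,22,23,24,19,25,26,27],![5,12,18,28,29,0,30,31],![6,13,19,32,33,30,15,34],![35,36,37,38,27,39,40,19],![3,10,16,8,41,28,32,42]]
def fk43 : List ℕ := [0,16496792,9762032,7059896,3247072,1196288,8846544,10601440,13852976,7089480,4415504,602744,15333784,8267112,10058360,616864,16526440,10911376,8828400,1794432,3552912,15329248,12656248,8280720,5316440,16492256,7099056,9120128,7993528,2345696,9747920,11764448,15606856,11826864,2375344,7974880,5330552,15602320,12670808,7073504,16521904,10040152,621400]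

theorem case_43 :
    ∃ M : Fin 8 → Fin 8 → EuclideanSpace ℂ (Fin 2 × Fin 2 × Fin 2),
      IsQLSIdx M ∧ FamCardEq (fun p : Fin 8 × Fin 8 => M p.1 p.2) 43 :=
  master1' fA43 fB43 43 fr43 (fun p => fg43 p.1 p.2) fk43
    (by decide +kernel) (by decide +kernel) (by decide +kernel) (by decide +kernel) (by decide +kernel) (by decide +kernel)

def fA44 : Fin 8 → Fin 8 → ZMod 8 := ![![0,0,0,0,0,0,0,0],![0,1,5,5,1,4,7,3],![0,7,1,1,3,4,5,5],![0,5,3,7,5,4,1,1],![0,3,7,3,7,4,3,7],![0,4,6,2,4,0,6,2],![0,6,4,4,2,0,2,6],![0,2,2,6,6,0,4,4]]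
def fB44 : Fin 8 → Fin 8 → ZMod 8 := ![![0,0,0,0,0,0,0,0],![6,0,2,2,4,6,0,4],![4,0,4,4,0,4,0,0],![2,0,6,6,4,2,0,4],![6,1,1,5,5,2,5,1],![4,1,3,7,1,0,5,5],![2,1,5,1,5,6,5,1],![0,1,7,3,1,4,5,5]]
def fr44 : Fin 44 → Fin 8 × Fin 8 := ![(0,0),(0,1),(0,2),(0,3),(0,4),(0,5),(0,6),(0,7),(1,0),(1,1),(1,2),(1,3),(1,4),(1,5),(1,6),(1,7),(3,0),(3,1),(3,2),(3,3),(3,4),(3,5),(3,6),(3,7),(4,0),(4,1),(4,2),(4,3),(4,4),(4,5),(4,6),(4,7),(5,0),(5,1),(5,2),(5,3),(6,0),(6,1),(6,2),(6,3),(6,4),(6,5),(6,6),(6,7)]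
def fg44 : Fin 8 → Fin 8 → Fin 44 := ![![0,1,2,3,4,5,6,7],![8,9,10,11,12,13,14,15],![11,8,9,10,15,12,13,14],![16,17,18,19,20,21,22,23],![24,25,26,27,28,29,30,31],![32,33,34,35,11,8,9,10],![36,37,38,39,40,41,42,43],![35,32,33,34,10,11,8,9]]
def fk44 : List ℕ := [0,13134096,9453600,5777712,8290008,2512872,15613688,11933640,8264520,2519640,15620968,11940472,14157856,8413488,4737024,1057040,2514664,15611896,11935432,8288216,8408448,4727952,1052064,14181552,15628248,11951848,8271864,2498248,4744368,1068416,14165136,8392096,5784992,11440,13108608,9464976,13117744,9437184,5794064,16416,2496456,15630040,11950056,8273656]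

theorem case_44 :
    ∃ M : Fin 8 → Fin 8 → EuclideanSpace ℂ (Fin 2 × Fin 2 × Fin 2),
      IsQLSIdx M ∧ FamCardEq (fun p : Fin 8 × Fin 8 => M p.1 p.2) 44 :=
  master1' fA44 fB44 44 fr44 (fun p => fg44 p.1 p.2) fk44
    (by decide +kernel) (by decide +kernel) (by decide +kernel) (by decide +kernel) (by decide +kernel) (by decide +kernel)

def fA45 : Fin 8 → Fin 8 → ZMod 8 := ![![0,0,0,0,0,0,0,0],![0,0,4,7,1,5,4,3],![0,5,3,0,4,1,4,7],![0,1,3,4,4,5,0,7],![0,4,6,2,0,4,2,6],![0,4,2,3,7,7,6,3],![0,0,7,4,5,1,3,4],![0,4,7,6,3,3,7,2]]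
def fB45 : Fin 8 → Fin 8 → ZMod 8 := ![![0,0,0,0,0,0,0,0],![0,0,4,7,1,5,4,3],![0,4,2,3,7,7,6,3],![0,0,7,4,5,1,3,4],![0,4,7,6,3,3,7,2],![0,6,3,1,4,2,5,7],![0,2,3,5,4,6,1,7],![0,4,6,2,0,4,2,6]]
def fr45 : Fin 45 → Fin 8 × Fin 8 := ![(0,0),(0,1),(0,2),(0,3),(0,4),(0,5),(0,6),(0,7),(1,1),(1,3),(1,4),(1,5),(1,6),(1,7),(2,0),(2,1),(2,2),(2,3),(2,4),(2,5),(2,6),(2,7),(3,0),(3,1),(3,2),(3,3),(3,4),(3,7),(4,2),(4,3),(4,4),(4,5),(4,6),(4,7),(5,2),(5,3),(5,4),(5,5),(5,6),(6,3),(6,5),(6,6),(7,4),(7,5),(7,6)]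
def fg45 : Fin 8 → Fin 8 → Fin 45 := ![![0,1,2,3,4,5,6,7],![1,8,7,9,10,11,12,13],![14,15,16,17,18,19,20,21],![22,23,24,25,26,20,19,27],![7,13,28,29,30,31,32,33],![2,7,34,35,36,37,38,28],![3,9,35,39,7,40,41,29],![4,10,36,7,42,43,44,30]]
def fk45 : List ℕ := [0,7511808,8124064,9230784,6143456,16073456,15157968,13239712,12659712,16737984,11291360,4706800,5626320,3707552,15778024,4415464,4732744,8198312,3046536,12944280,14126008,12239944,14862536,5330888,5914472,7278728,3962024,11062376,2226688,5692768,504128,12535376,11357808,9439488,13856000,14962272,11870784,5028176,6205808,1646976,6396592,7574160,10185088,3341968,2160304]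

theorem case_45 :
    ∃ M : Fin 8 → Fin 8 → EuclideanSpace ℂ (Fin 2 × Fin 2 × Fin 2),
      IsQLSIdx M ∧ FamCardEq (fun p : Fin 8 × Fin 8 => M p.1 p.2) 45 :=
  master1' fA45 fB45 45 fr45 (fun p => fg45 p.1 p.2) fk45
    (by decide +kernel) (by decide +kernel) (by decide +kernel) (by decide +kernel) (by decide +kernel) (by decide +kernel)

def fA46 : Fin 8 → Fin 8 → ZMod 8 := ![![0,0,0,0,0,0,0,0],![0,1,3,4,6,5,7,2],![0,6,4,4,2,2,0,6],![0,7,4,0,3,7,4,3],![0,5,7,4,6,1,3,2],![0,3,4,0,7,3,4,7],![0,2,0,4,2,6,4,6],![0,4,0,0,4,4,0,4]]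
def fB46 : Fin 8 → Fin 8 → ZMod 8 := ![![0,0,0,0,0,0,0,0],![0,2,4,0,3,6,4,7],![0,5,7,4,1,5,3,1],![0,5,3,4,2,1,7,6],![0,1,7,4,5,1,3,5],![0,4,0,0,4,4,0,4],![0,1,3,4,6,5,7,2],![0,6,4,0,7,2,4,3]]
def fr46 : Fin 46 → Fin 8 × Fin 8 := ![(0,0),(0,1),(0,2),(0,3),(0,4),(0,5),(0,6),(0,7),(1,1),(1,2),(1,3),(1,4),(1,6),(1,7),(2,0),(2,1),(2,2),(2,3),(2,4),(2,5),(2,6),(2,7),(3,0),(3,1),(3,2),(3,3),(3,4),(3,5),(3,6),(3,7),(4,0),(4,1),(4,2),(4,3),(4,4),(4,5),(4,6),(4,7),(6,0),(6,1),(6,2),(6,3),(6,4),(6,5),(6,6),(6,7)]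
def fg46 : Fin 8 → Fin 8 → Fin 46 := ![![0,1,2,3,4,5,6,7],![6,8,9,10,11,3,12,13],![14,15,16,17,18,19,20,21],![22,23,24,25,26,27,28,29],![30,31,32,33,34,35,36,37],![27,29,26,28,24,22,25,23],![38,39,40,41,42,43,44,45],![5,7,4,6,2,0,3,1]]
def fk46 : List ℕ := [0,15937808,3054056,14461160,11327944,8536096,6219976,7434544,2988504,6910128,1769904,15413392,10043792,11524600,12658992,11556864,15708376,10338776,7205112,4417808,2064888,3282976,7582008,4382728,10373344,2906592,1837248,15855896,11409856,12623912,5040616,4167928,8090000,589968,16331184,13543880,9126064,12441816,13838352,10639648,16626168,9421048,8384984,5335088,884952,2103552]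

theorem case_46 :
    ∃ M : Fin 8 → Fin 8 → EuclideanSpace ℂ (Fin 2 × Fin 2 × Fin 2),
      IsQLSIdx M ∧ FamCardEq (fun p : Fin 8 × Fin 8 => M p.1 p.2) 46 :=
  master1' fA46 fB46 46 fr46 (fun p => fg46 p.1 p.2) fk46
    (by decide +kernel) (by decide +kernel) (by decide +kernel) (by decide +kernel) (by decide +kernel) (by decide +kernel)

def fA47 : Fin 8 → Fin 8 → ZMod 8 := ![![0,0,0,0,0,0,0,0],![0,1,3,4,6,5,7,2],![0,6,4,4,2,2,0,6],![0,7,4,0,3,7,4,3],![0,5,7,4,6,1,3,2],![0,3,4,0,7,3,4,7],![0,2,0,4,2,6,4,6],![0,4,0,0,4,4,0,4]]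
def fB47 : Fin 8 → Fin 8 → ZMod 8 := ![![0,0,0,0,0,0,0,0],![0,1,3,4,6,5,7,2],![0,6,4,4,2,2,0,6],![0,2,2,6,4,0,4,6],![0,2,6,2,0,4,4,6],![0,6,4,0,2,6,4,2],![0,4,0,0,4,4,0,4],![0,5,7,4,6,1,3,2]]
def fr47 : Fin 47 → Fin 8 × Fin 8 := ![(0,0),(0,1),(0,2),(0,3),(0,4),(0,5),(0,6),(0,7),(1,1),(1,2),(1,3),(1,4),(1,5),(1,6),(1,7),(2,3),(2,4),(2,5),(2,6),(2,7),(3,0),(3,1),(3,2),(3,3),(3,4),(3,5),(3,6),(3,7),(4,3),(4,4),(4,5),(4,6),(5,1),(5,2),(5,3),(5,4),(5,5),(5,7),(6,0),(6,2),(6,3),(6,4),(6,5),(6,6),(7,3),(7,4),(7,5)]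
def fg47 : Fin 8 → Fin 8 → Fin 47 := ![![0,1,2,3,4,5,6,7],![1,8,9,10,11,12,13,14],![2,9,6,15,16,17,18,19],![20,21,22,23,24,25,26,27],![7,14,19,28,29,30,31,8],![26,32,33,34,35,36,20,37],![38,19,39,40,41,42,43,9],![6,13,18,44,45,46,0,31]]
def fk47 : List ℕ := [0,6219976,12658992,13651088,13763984,5447984,8536096,5040616,10043792,2064888,959832,846936,9275896,14461160,9126064,9528704,9645184,1067040,4417808,884952,7582008,11409856,3201064,2358664,2208904,10670120,15855896,12327136,1877112,2026872,10455256,13543880,2906592,11704328,10599848,10745000,2134024,4085952,13838352,9453824,8610976,8465824,149760,5335088,5377200,5260720,13721872]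

theorem case_47 :
    ∃ M : Fin 8 → Fin 8 → EuclideanSpace ℂ (Fin 2 × Fin 2 × Fin 2),
      IsQLSIdx M ∧ FamCardEq (fun p : Fin 8 × Fin 8 => M p.1 p.2) 47 :=
  master1' fA47 fB47 47 fr47 (fun p => fg47 p.1 p.2) fk47
    (by decide +kernel) (by decide +kernel) (by decide +kernel) (by decide +kernel) (by decide +kernel) (by decide +kernel)

def fA48 : Fin 8 → Fin 8 → ZMod 8 := ![![0,0,0,0,0,0,0,0],![0,4,0,7,3,4,6,2],![0,0,4,2,6,4,5,1],![0,4,4,4,4,0,0,0],![0,0,0,4,4,0,4,4],![0,4,4,0,0,0,4,4],![0,0,4,6,2,4,1,5],![0,4,0,3,7,4,2,6]]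
def fB48 : Fin 8 → Fin 8 → ZMod 8 := ![![0,0,0,0,0,0,0,0],![0,0,0,4,4,3,4,7],![0,0,4,6,2,7,4,3],![0,1,5,3,7,4,0,4],![0,4,4,4,4,0,0,0],![0,5,1,7,3,4,0,4],![0,4,4,0,0,3,4,7],![0,4,0,2,6,7,4,3]]
def fr48 : Fin 48 → Fin 8 × Fin 8 := ![(0,0),(0,1),(0,2),(0,3),(0,4),(0,5),(0,6),(0,7),(1,0),(1,1),(1,2),(1,3),(1,4),(1,5),(1,6),(1,7),(2,0),(2,1),(2,2),(2,3),(2,4),(2,5),(2,6),(2,7),(4,0),(4,1),(4,2),(4,3),(4,4),(4,5),(4,6),(4,7),(6,0),(6,1),(6,2),(6,3),(6,4),(6,5),(6,6),(6,7),(7,0),(7,1),(7,2),(7,3),(7,4),(7,5),(7,6),(7,7)]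
def fg48 : Fin 8 → Fin 8 → Fin 48 := ![![0,1,2,3,4,5,6,7],![8,9,10,11,12,13,14,15],![16,17,18,19,20,21,22,23],![4,6,7,5,0,3,1,2],![24,25,26,27,28,29,30,31],![28,30,31,29,24,27,25,26],![32,33,34,35,36,37,38,39],![40,41,42,43,44,45,46,47]]
def fk48 : List ℕ := [0,15845376,7580928,8550216,18720,8535656,15827232,7595040,5914144,2881056,11131680,14165352,5928704,14183496,2866944,11112960,3564800,503040,8749056,11819592,3550240,11801448,517152,8767776,9455616,6389760,14935296,1195848,9437472,1209960,6408480,14920736,10890496,9954560,1427456,2363976,10904608,2382696,9940000,1409312,13268512,12303904,3773216,4746600,13254400,4727880,12318464,3791360]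

theorem case_48 :
    ∃ M : Fin 8 → Fin 8 → EuclideanSpace ℂ (Fin 2 × Fin 2 × Fin 2),
      IsQLSIdx M ∧ FamCardEq (fun p : Fin 8 × Fin 8 => M p.1 p.2) 48 :=
  master1' fA48 fB48 48 fr48 (fun p => fg48 p.1 p.2) fk48
    (by decide +kernel) (by decide +kernel) (by decide +kernel) (by decide +kernel) (by decide +kernel) (by decide +kernel)

def fA49 : Fin 8 → Fin 8 → ZMod 8 := ![![0,0,0,0,0,0,0,0],![0,1,3,4,6,5,7,2],![0,6,4,4,2,2,0,6],![0,7,4,0,3,7,4,3],![0,5,7,4,6,1,3,2],![0,3,4,0,7,3,4,7],![0,2,0,4,2,6,4,6],![0,4,0,0,4,4,0,4]]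
def fB49 : Fin 8 → Fin 8 → ZMod 8 := ![![0,0,0,0,0,0,0,0],![7,6,3,4,2,1,0,5],![4,3,4,0,3,7,0,7],![4,7,4,0,7,3,0,3],![4,2,0,4,6,2,0,6],![0,4,0,0,4,4,0,4],![3,6,7,4,2,5,0,1],![0,2,4,4,6,6,0,2]]
def fr49 : Fin 49 → Fin 8 × Fin 8 := ![(0,0),(0,1),(0,2),(0,3),(0,4),(0,5),(0,6),(0,7),(1,0),(1,1),(1,2),(1,3),(1,4),(1,5),(1,6),(1,7),(2,0),(2,1),(2,2),(2,3),(2,4),(2,6),(3,0),(3,1),(3,4),(3,5),(3,6),(3,7),(4,0),(4,1),(4,2),(4,3),(4,4),(4,5),(4,6),(4,7),(5,1),(5,4),(5,6),(5,7),(6,0),(6,1),(6,4),(6,5),(6,6),(6,7),(7,1),(7,4),(7,6)]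
def fg49 : Fin 8 → Fin 8 → Fin 49 := ![![0,1,2,3,4,5,6,7],![8,9,10,11,12,13,14,15],![16,17,18,19,20,7,21,0],![22,23,16,7,24,25,26,27],![28,29,30,31,32,33,34,35],![25,36,7,16,37,22,38,39],![40,41,37,24,42,43,44,45],![5,46,3,2,47,0,48,16]]
def fk49 : List ℕ := [0,12925752,7469112,15972376,5447984,8536096,13988632,4417808,6219976,234432,11292864,3018976,9275896,14461160,1301472,10338776,12658992,8802856,3313960,11587848,1067040,9837064,7582008,3467824,10670120,15855896,2400784,11704328,5040616,1151712,12472800,3936704,10455256,13543880,121536,9421048,11971088,2134024,10936880,3201064,13838352,9720584,149760,5335088,8657704,1179936,4684568,13721872,5714744]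

theorem case_49 :
    ∃ M : Fin 8 → Fin 8 → EuclideanSpace ℂ (Fin 2 × Fin 2 × Fin 2),
      IsQLSIdx M ∧ FamCardEq (fun p : Fin 8 × Fin 8 => M p.1 p.2) 49 :=
  master1' fA49 fB49 49 fr49 (fun p => fg49 p.1 p.2) fk49
    (by decide +kernel) (by decide +kernel) (by decide +kernel) (by decide +kernel) (by decide +kernel) (by decide +kernel)

def fA50 : Fin 8 → Fin 8 → ZMod 8 := ![![0,0,0,0,0,0,0,0],![0,2,0,1,4,4,5,6],![0,5,1,5,1,4,1,5],![0,5,7,4,3,0,4,1],![0,1,5,5,5,4,1,1],![0,4,4,0,4,0,0,4],![0,1,3,4,7,0,4,5],![0,6,4,1,0,4,5,2]]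
def fB50 : Fin 8 → Fin 8 → ZMod 8 := ![![0,0,0,0,0,0,0,0],![0,2,0,1,4,4,5,6],![0,5,1,5,1,4,1,5],![0,5,4,1,3,0,7,4],![0,1,4,6,5,4,0,2],![0,6,5,2,0,4,4,1],![0,4,7,5,4,0,3,1],![0,1,3,4,7,0,4,5]]
def fr50 : Fin 50 → Fin 8 × Fin 8 := ![(0,0),(0,1),(0,2),(0,3),(0,4),(0,5),(0,6),(0,7),(1,1),(1,2),(1,3),(1,4),(1,5),(1,6),(1,7),(2,2),(2,3),(2,4),(2,5),(2,6),(2,7),(3,0),(3,1),(3,3),(3,4),(3,5),(3,6),(3,7),(4,0),(4,1),(4,2),(4,3),(4,4),(4,5),(4,6),(5,0),(5,3),(5,4),(5,5),(5,6),(6,3),(6,4),(6,5),(6,6),(6,7),(7,1),(7,3),(7,4),(7,5),(7,6)]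
def fg50 : Fin 8 → Fin 8 → Fin 50 := ![![0,1,2,3,4,5,6,7],![1,8,9,10,11,12,13,14],![2,9,15,16,17,18,19,20],![21,22,1,23,24,25,26,27],![28,29,30,31,32,33,34,1],![35,20,28,36,37,38,39,21],![7,14,20,40,41,42,43,44],![20,45,29,46,47,48,49,22]]
def fk50 : List ℕ := [0,14041616,10885736,10236712,4349192,3278192,2903008,11565256,8913952,7887992,5403960,1318680,14960448,14814704,6699736,4727952,2248016,14968688,13901720,13784072,5636912,3160552,15105016,11299536,7472368,4341016,6058888,12591280,2513736,16260440,13133232,10620016,6563408,5529272,5379368,8405280,1864200,12721192,11682896,11274944,2894832,15877584,12745784,14430888,4219280,541952,13775896,9723448,6555232,6442192]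

theorem case_50 :
    ∃ M : Fin 8 → Fin 8 → EuclideanSpace ℂ (Fin 2 × Fin 2 × Fin 2),
      IsQLSIdx M ∧ FamCardEq (fun p : Fin 8 × Fin 8 => M p.1 p.2) 50 :=
  master1' fA50 fB50 50 fr50 (fun p => fg50 p.1 p.2) fk50
    (by decide +kernel) (by decide +kernel) (by decide +kernel) (by decide +kernel) (by decide +kernel) (by decide +kernel)

def fA51 : Fin 8 → Fin 8 → ZMod 8 := ![![0,0,0,0,0,0,0,0],![0,6,5,7,2,3,4,1],![0,2,6,4,0,2,6,4],![0,4,2,2,6,4,6,0],![0,6,1,3,2,7,4,5],![0,2,6,4,4,6,2,0],![0,0,2,6,6,4,2,4],![0,4,4,0,4,0,0,4]]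
def fB51 : Fin 8 → Fin 8 → ZMod 8 := ![![0,0,0,0,0,0,0,0],![0,2,6,4,0,2,6,4],![0,2,6,4,4,6,2,0],![0,1,1,0,5,4,4,5],![0,5,5,0,1,4,4,1],![0,6,2,4,2,0,4,6],![0,6,2,4,6,4,0,2],![0,4,4,0,4,0,0,4]]
def fr51 : Fin 51 → Fin 8 × Fin 8 := ![(0,0),(0,1),(0,2),(0,3),(0,4),(0,5),(0,6),(0,7),(1,0),(1,1),(1,2),(1,3),(1,4),(1,5),(1,6),(1,7),(2,1),(2,3),(2,4),(2,5),(2,6),(2,7),(3,0),(3,1),(3,2),(3,3),(3,4),(3,5),(3,6),(3,7),(4,0),(4,1),(4,2),(4,3),(4,4),(4,5),(4,6),(4,7),(5,3),(5,4),(5,7),(6,0),(6,1),(6,2),(6,3),(6,4),(6,5),(6,6),(6,7),(7,5),(7,6)]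
def fg51 : Fin 8 → Fin 8 → Fin 51 := ![![0,1,2,3,4,5,6,7],![8,9,10,11,12,13,14,15],![1,16,7,17,18,19,20,21],![22,23,24,25,26,27,28,29],![30,31,32,33,34,35,36,37],![2,7,16,38,39,20,19,40],![41,42,43,44,45,46,47,48],![7,21,40,4,3,49,50,0]]
def fk51 : List ℕ := [0,10029456,739728,11685960,3281256,13641904,4352176,8405280,3256176,11183808,3729088,12844984,4439704,14796768,7571424,11660880,1179936,2841048,11213048,4792320,14376960,1657008,1729696,9661488,76848,11023592,2651592,13241616,5786896,10102144,11773552,2666432,12251072,4323000,12695448,6541024,15830752,3401552,12130776,3758328,9111728,9071744,222224,9511952,3685576,12090856,5899568,13124912,667040,5269904,12724624]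

theorem case_51 :
    ∃ M : Fin 8 → Fin 8 → EuclideanSpace ℂ (Fin 2 × Fin 2 × Fin 2),
      IsQLSIdx M ∧ FamCardEq (fun p : Fin 8 × Fin 8 => M p.1 p.2) 51 :=
  master1' fA51 fB51 51 fr51 (fun p => fg51 p.1 p.2) fk51
    (by decide +kernel) (by decide +kernel) (by decide +kernel) (by decide +kernel) (by decide +kernel) (by decide +kernel)

def fA52 : Fin 8 → Fin 8 → ZMod 8 := ![![0,0,0,0,0,0,0,0],![0,3,2,4,3,7,6,7],![0,6,3,2,7,1,5,4],![0,4,7,3,6,3,2,7],![0,0,4,0,4,4,4,0],![0,2,3,6,7,5,1,4],![0,4,7,7,2,3,6,3],![0,7,6,4,3,7,2,3]]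
def fB52 : Fin 8 → Fin 8 → ZMod 8 := ![![0,0,0,0,0,0,0,0],![0,4,0,7,3,4,6,2],![0,0,4,2,6,4,5,1],![0,4,4,4,4,0,0,0],![0,0,0,4,4,0,4,4],![0,4,4,0,0,0,4,4],![0,0,4,6,2,4,1,5],![0,4,0,3,7,4,2,6]]
def fr52 : Fin 52 → Fin 8 × Fin 8 := ![(0,0),(0,1),(0,2),(0,3),(0,4),(0,5),(0,6),(0,7),(1,0),(1,1),(1,2),(1,3),(1,4),(1,5),(1,6),(1,7),(2,0),(2,1),(2,2),(2,3),(2,4),(2,5),(2,6),(2,7),(3,0),(3,1),(3,2),(3,3),(3,4),(3,5),(3,6),(3,7),(4,0),(4,1),(4,2),(4,3),(4,4),(4,5),(4,6),(4,7),(5,0),(5,1),(5,2),(5,3),(5,4),(5,5),(5,6),(5,7),(7,1),(7,2),(7,6),(7,7)]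
def fg52 : Fin 8 → Fin 8 → Fin 52 := ![![0,1,2,3,4,5,6,7],![8,9,10,11,12,13,14,15],![16,17,18,19,20,21,22,23],![24,25,26,27,28,29,30,31],![32,33,34,35,36,37,38,39],![40,41,42,43,44,45,46,47],![28,31,30,29,24,27,26,25],![13,48,49,12,11,8,50,51]]
def fk52 : List ℕ := [0,5914144,3564800,18720,9455616,9437472,10890496,13268512,16496792,3270328,892312,16511416,7073944,7059896,10343832,10596024,9762032,13542096,11196912,9747920,310512,325072,3838448,6220496,15329248,2332096,2083552,15314624,7974880,7988928,9405152,11787712,1196288,4751136,2368512,1181728,8521984,8536096,11824128,14169888,8846544,14461680,12112336,8828400,1488080,1506800,2660816,5038832,10610584,10329272,906424,3256216]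

theorem case_52 :
    ∃ M : Fin 8 → Fin 8 → EuclideanSpace ℂ (Fin 2 × Fin 2 × Fin 2),
      IsQLSIdx M ∧ FamCardEq (fun p : Fin 8 × Fin 8 => M p.1 p.2) 52 :=
  master1' fA52 fB52 52 fr52 (fun p => fg52 p.1 p.2) fk52
    (by decide +kernel) (by decide +kernel) (by decide +kernel) (by decide +kernel) (by decide +kernel) (by decide +kernel)

def fA53 : Fin 8 → Fin 8 → ZMod 8 := ![![0,0,0,0,0,0,0,0],![0,1,3,4,6,5,7,2],![0,6,4,4,2,2,0,6],![0,7,4,0,3,7,4,3],![0,5,7,4,6,1,3,2],![0,3,4,0,7,3,4,7],![0,2,0,4,2,6,4,6],![0,4,0,0,4,4,0,4]]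
def fB53 : Fin 8 → Fin 8 → ZMod 8 := ![![0,0,0,0,0,0,0,0],![4,6,0,5,2,5,1,1],![4,2,0,1,6,5,5,1],![2,5,0,6,7,1,4,3],![0,1,0,4,1,5,4,5],![6,5,0,2,3,1,4,7],![0,4,0,0,4,4,0,4],![4,1,0,4,5,1,0,5]]
def fr53 : Fin 53 → Fin 8 × Fin 8 := ![(0,0),(0,1),(0,2),(0,3),(0,4),(0,5),(0,6),(0,7),(1,0),(1,1),(1,2),(1,3),(1,4),(1,5),(1,6),(1,7),(2,0),(2,1),(2,2),(2,3),(2,4),(2,5),(2,6),(2,7),(3,1),(3,2),(3,3),(3,4),(3,5),(3,6),(4,0),(4,1),(4,2),(4,4),(4,6),(4,7),(5,1),(5,2),(5,3),(5,4),(5,5),(6,0),(6,1),(6,2),(6,4),(6,6),(6,7),(7,1),(7,2),(7,3),(7,4),(7,5),(7,7)]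
def fg53 : Fin 8 → Fin 8 → Fin 53 := ![![0,1,2,3,4,5,6,7],![8,9,10,11,12,13,14,15],![16,17,18,19,20,21,22,23],![20,24,25,26,27,28,29,6],![30,31,32,13,33,11,34,35],![29,36,37,38,39,40,20,0],![41,42,43,21,44,19,45,46],![6,47,48,49,50,51,0,52]]
def fk53 : List ℕ := [0,11854608,10791728,2873752,11704328,3791032,8536096,3313960,6219976,15944664,14877688,6697056,15560912,7614784,14461160,7174640,12658992,7703040,6668832,15265928,7582008,16445864,4417808,15972376,266760,1333800,10160272,149760,8980912,15855896,5040616,14764792,15794904,16740848,13543880,8354000,8802856,9837064,1657008,8390944,739728,13838352,6785824,7848704,6402072,5335088,14793016,3580720,2550544,11114936,3201064,12294296,11587848]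

theorem case_53 :
    ∃ M : Fin 8 → Fin 8 → EuclideanSpace ℂ (Fin 2 × Fin 2 × Fin 2),
      IsQLSIdx M ∧ FamCardEq (fun p : Fin 8 × Fin 8 => M p.1 p.2) 53 :=
  master1' fA53 fB53 53 fr53 (fun p => fg53 p.1 p.2) fk53
    (by decide +kernel) (by decide +kernel) (by decide +kernel) (by decide +kernel) (by decide +kernel) (by decide +kernel)

def fA54 : Fin 8 → Fin 8 → ZMod 8 := ![![0,0,0,0,0,0,0,0],![0,2,7,6,0,4,3,4],![0,3,4,2,7,4,6,0],![0,3,1,4,5,0,7,4],![0,4,5,7,4,0,3,1],![0,6,0,3,4,4,2,7],![0,7,4,3,1,0,4,5],![0,7,3,7,3,4,7,3]]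
def fB54 : Fin 8 → Fin 8 → ZMod 8 := ![![0,0,0,0,0,0,0,0],![4,2,3,6,0,0,7,4],![4,3,6,2,7,0,4,0],![0,3,7,4,5,0,1,4],![0,4,3,7,4,0,5,1],![4,6,2,3,4,0,0,7],![0,7,4,3,1,0,4,5],![4,7,7,7,3,0,3,3]]
def fr54 : Fin 54 → Fin 8 × Fin 8 := ![(0,0),(0,1),(0,2),(0,3),(0,4),(0,5),(0,6),(0,7),(1,0),(1,1),(1,2),(1,3),(1,4),(1,5),(1,6),(1,7),(2,0),(2,1),(2,2),(2,3),(2,4),(2,6),(2,7),(3,0),(3,1),(3,2),(3,3),(3,5),(3,6),(3,7),(4,0),(4,1),(4,2),(4,4),(4,6),(4,7),(5,0),(5,1),(5,3),(5,5),(5,6),(5,7),(6,1),(6,2),(6,3),(6,4),(6,5),(6,6),(7,0),(7,2),(7,3),(7,4),(7,5),(7,7)]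
def fg54 : Fin 8 → Fin 8 → Fin 54 := ![![0,1,2,3,4,5,6,7],![8,9,10,11,12,13,14,15],![16,17,18,19,20,15,21,22],![23,24,25,26,6,27,28,29],![30,31,32,6,33,19,34,35],![36,37,15,38,25,39,40,41],![6,42,43,44,45,46,47,8],![48,15,49,50,51,52,1,53]]
def fk54 : List ℕ := [0,935408,8535224,8673752,3428064,7475088,11540280,16676568,9309648,9978240,800840,1201576,10635952,16517984,4068040,6845096,1733912,276680,9970064,10374384,3027960,11143696,16018416,10246232,9051144,1967312,8240,15620072,2912080,8015664,2903904,3801872,11434968,4197376,14439512,668728,15353392,15993824,7217096,5784960,10116392,12860616,12475112,3294128,3436240,12867032,136328,4205616,8273656,16542576,14812816,9600408,13384776,5776784]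

theorem case_54 :
    ∃ M : Fin 8 → Fin 8 → EuclideanSpace ℂ (Fin 2 × Fin 2 × Fin 2),
      IsQLSIdx M ∧ FamCardEq (fun p : Fin 8 × Fin 8 => M p.1 p.2) 54 :=
  master1' fA54 fB54 54 fr54 (fun p => fg54 p.1 p.2) fk54
    (by decide +kernel) (by decide +kernel) (by decide +kernel) (by decide +kernel) (by decide +kernel) (by decide +kernel)

def fA55 : Fin 8 → Fin 8 → ZMod 8 := ![![0,0,0,0,0,0,0,0],![0,4,4,5,0,1,7,3],![0,6,7,3,7,4,3,2],![0,0,4,1,4,5,7,3],![0,2,7,4,3,3,6,7],![0,4,0,0,4,0,4,4],![0,6,3,4,3,7,2,7],![0,2,3,7,7,4,3,6]]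
def fB55 : Fin 8 → Fin 8 → ZMod 8 := ![![0,0,0,0,0,0,0,0],![0,4,4,5,0,1,7,3],![0,6,7,3,7,4,3,2],![0,0,3,1,5,4,7,4],![0,4,3,0,1,5,4,7],![0,2,7,4,3,3,6,7],![0,6,2,4,4,0,2,6],![0,2,6,7,4,7,3,3]]
def fr55 : Fin 55 → Fin 8 × Fin 8 := ![(0,0),(0,1),(0,2),(0,3),(0,4),(0,5),(0,6),(0,7),(1,1),(1,2),(1,3),(1,4),(1,5),(1,6),(2,2),(2,4),(2,5),(2,6),(2,7),(3,0),(3,1),(3,2),(3,3),(3,4),(3,5),(3,6),(3,7),(4,3),(4,5),(4,6),(4,7),(5,0),(5,1),(5,2),(5,3),(5,4),(5,5),(5,6),(5,7),(6,0),(6,1),(6,2),(6,3),(6,4),(6,5),(6,6),(6,7),(7,0),(7,1),(7,2),(7,3),(7,4),(7,5),(7,6),(7,7)]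
def fg55 : Fin 8 → Fin 8 → Fin 55 := ![![0,1,2,3,4,5,6,7],![1,8,9,10,11,12,13,6],![2,9,14,6,15,16,17,18],![19,20,21,22,23,24,25,26],![5,12,16,27,6,28,29,30],![31,32,33,34,35,36,37,38],![39,40,41,42,43,44,45,46],![47,48,49,50,51,52,53,54]]
def fk55 : List ℕ := [0,8162080,5142512,10375872,15896800,16366032,13125808,7327632,14222336,11202768,16440800,5184448,5649136,2409360,9989536,3966608,2600832,1457760,12170560,8307456,14371872,11057392,16291264,5067744,5536464,2526128,13238416,7834256,13853088,10612800,4552544,9453600,15518464,14563280,922336,6475968,6945264,5769360,16748464,15448304,4469712,3518112,6654896,14305680,12673152,11792736,5731904,13532880,2816496,1598592,4735376,12357552,10987168,9844544,3783776]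

theorem case_55 :
    ∃ M : Fin 8 → Fin 8 → EuclideanSpace ℂ (Fin 2 × Fin 2 × Fin 2),
      IsQLSIdx M ∧ FamCardEq (fun p : Fin 8 × Fin 8 => M p.1 p.2) 55 :=
  master1' fA55 fB55 55 fr55 (fun p => fg55 p.1 p.2) fk55
    (by decide +kernel) (by decide +kernel) (by decide +kernel) (by decide +kernel) (by decide +kernel) (by decide +kernel)

def fA56 : Fin 8 → Fin 8 → ZMod 8 := ![![0,0,0,0,0,0,0,0],![0,1,6,2,1,5,5,4],![0,5,2,6,1,5,1,4],![0,4,5,7,3,1,6,2],![0,4,1,1,5,5,4,0],![0,4,5,3,7,1,2,6],![0,0,4,4,4,4,0,0],![0,0,1,5,5,1,4,4]]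
def fB56 : Fin 8 → Fin 8 → ZMod 8 := ![![0,0,0,0,0,0,0,0],![0,6,4,5,3,2,7,1],![0,1,0,4,4,5,4,0],![0,0,4,4,7,0,3,4],![0,5,0,0,4,1,4,4],![0,2,4,1,3,6,7,5],![0,4,4,0,7,4,3,0],![0,4,0,4,0,4,0,4]]
def fr56 : Fin 56 → Fin 8 × Fin 8 := ![(0,0),(0,1),(0,2),(0,3),(0,4),(0,5),(0,6),(0,7),(1,0),(1,1),(1,2),(1,3),(1,4),(1,5),(1,6),(1,7),(2,0),(2,1),(2,2),(2,3),(2,4),(2,5),(2,6),(2,7),(3,0),(3,1),(3,2),(3,3),(3,4),(3,5),(3,6),(3,7),(4,0),(4,1),(4,2),(4,3),(4,4),(4,5),(4,6),(4,7),(5,0),(5,1),(5,2),(5,3),(5,4),(5,5),(5,6),(5,7),(6,0),(6,1),(6,2),(6,3),(6,4),(6,5),(6,6),(6,7)]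
def fg56 : Fin 8 → Fin 8 → Fin 56 := ![![0,1,2,3,4,5,6,7],![8,9,10,11,12,13,14,15],![16,17,18,19,20,21,22,23],![24,25,26,27,28,29,30,31],![32,33,34,35,36,37,38,39],![40,41,42,43,44,45,46,47],![48,49,50,51,52,53,54,55],![39,37,36,38,34,33,35,32]]
def fk56 : List ℕ := [0,4012848,1230856,9206016,9486376,12530448,946464,8521760,9868680,11783864,8740240,167048,480688,3262104,8422568,1351080,8821928,10733464,9786544,1213864,1531024,2215864,9473416,300168,5816160,7727184,4945768,12887648,13205320,16244848,4632128,14333760,1233504,3116368,72296,10406752,8589896,11371888,1884992,9493056,13170528,15048784,14368616,5566048,5846856,6793328,14083648,4915008,149760,4158000,1081608,9318400,9603368,12417552,800800,8405280]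

theorem case_56 :
    ∃ M : Fin 8 → Fin 8 → EuclideanSpace ℂ (Fin 2 × Fin 2 × Fin 2),
      IsQLSIdx M ∧ FamCardEq (fun p : Fin 8 × Fin 8 => M p.1 p.2) 56 :=
  master1' fA56 fB56 56 fr56 (fun p => fg56 p.1 p.2) fk56
    (by decide +kernel) (by decide +kernel) (by decide +kernel) (by decide +kernel) (by decide +kernel) (by decide +kernel)

def fA57 : Fin 8 → Fin 8 → ZMod 8 := ![![0,0,0,0,0,0,0,0],![0,1,6,2,1,5,5,4],![0,5,2,6,1,5,1,4],![0,4,5,7,3,1,6,2],![0,4,1,1,5,5,4,0],![0,4,5,3,7,1,2,6],![0,0,4,4,4,4,0,0],![0,0,1,5,5,1,4,4]]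
def fB57 : Fin 8 → Fin 8 → ZMod 8 := ![![0,0,0,0,0,0,0,0],![4,5,6,2,1,5,1,0],![4,5,2,6,5,1,1,0],![2,1,5,7,4,6,3,0],![0,5,1,1,4,4,5,0],![6,1,5,3,4,2,7,0],![0,4,4,4,0,0,4,0],![4,1,1,5,0,4,5,0]]
def fr57 : Fin 57 → Fin 8 × Fin 8 := ![(0,0),(0,1),(0,2),(0,3),(0,4),(0,5),(0,6),(0,7),(1,1),(1,2),(1,3),(1,4),(1,5),(1,6),(1,7),(2,1),(2,2),(2,3),(2,4),(2,5),(2,7),(3,0),(3,1),(3,2),(3,3),(3,4),(3,5),(3,6),(3,7),(4,0),(4,1),(4,2),(4,3),(4,4),(4,5),(4,6),(5,0),(5,1),(5,2),(5,3),(5,4),(5,5),(5,6),(5,7),(6,0),(6,3),(6,4),(6,5),(6,6),(6,7),(7,0),(7,1),(7,2),(7,3),(7,5),(7,6),(7,7)]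
def fg57 : Fin 8 → Fin 8 → Fin 57 := ![![0,1,2,3,4,5,6,7],![2,8,9,10,11,12,13,14],![13,15,16,17,18,19,2,20],![21,22,23,24,25,26,27,28],![29,30,31,32,33,34,35,2],![36,37,38,39,40,41,42,43],![44,2,1,45,46,47,48,49],![50,51,52,53,13,54,55,56]]
def fk57 : List ℕ := [0,9755784,9868680,12987128,1458792,4615128,1050912,8668008,745488,600336,5815872,8968176,14221152,8821928,1758960,1796400,1646640,4765536,10018512,13170240,712656,5816160,13437928,13583080,2021400,5173640,10393912,4765248,14479496,1233504,8859368,8742888,13958424,300168,5553208,187200,13170528,6112232,6228712,9343000,14596488,971064,14220864,5027976,149760,12870648,1313640,4465368,1196064,8784488,9493056,337608,487368,5698872,14070808,8442720,1351080]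

theorem case_57 :
    ∃ M : Fin 8 → Fin 8 → EuclideanSpace ℂ (Fin 2 × Fin 2 × Fin 2),
      IsQLSIdx M ∧ FamCardEq (fun p : Fin 8 × Fin 8 => M p.1 p.2) 57 :=
  master1' fA57 fB57 57 fr57 (fun p => fg57 p.1 p.2) fk57
    (by decide +kernel) (by decide +kernel) (by decide +kernel) (by decide +kernel) (by decide +kernel) (by decide +kernel)

def fA58 : Fin 8 → Fin 8 → ZMod 8 := ![![0,0,0,0,0,0,0,0],![0,2,4,0,6,4,2,6],![0,5,2,4,5,6,1,1],![0,4,5,0,4,1,6,2],![0,3,1,4,7,1,5,5],![0,7,6,4,3,2,3,7],![0,1,5,4,1,5,7,3],![0,6,1,0,2,5,4,4]]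
def fB58 : Fin 8 → Fin 8 → ZMod 8 := ![![0,0,0,0,0,0,0,0],![1,2,4,5,0,4,6,0],![4,6,5,4,0,1,2,0],![5,4,1,1,0,5,4,0],![6,4,2,6,0,2,0,4],![2,6,7,2,0,3,6,4],![7,2,6,3,0,6,2,4],![3,0,3,7,0,7,4,4]]
def fr58 : Fin 58 → Fin 8 × Fin 8 := ![(0,0),(0,1),(0,2),(0,3),(0,4),(0,5),(0,6),(0,7),(1,0),(1,1),(1,2),(1,3),(1,4),(1,5),(1,6),(1,7),(2,0),(2,1),(2,2),(2,3),(2,4),(2,5),(2,6),(2,7),(3,0),(3,1),(3,2),(3,3),(3,4),(3,5),(3,6),(3,7),(4,1),(4,2),(4,3),(4,5),(4,6),(4,7),(5,0),(5,1),(5,2),(5,3),(5,4),(5,5),(5,6),(5,7),(6,1),(6,2),(6,4),(6,5),(6,6),(6,7),(7,0),(7,1),(7,2),(7,3),(7,5),(7,6)]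
def fg58 : Fin 8 → Fin 8 → Fin 58 := ![![0,1,2,3,4,5,6,7],![8,9,10,11,12,13,14,15],![16,17,18,19,20,21,22,23],![24,25,26,27,28,29,30,31],![27,32,33,34,31,35,36,37],![38,39,40,41,42,43,44,45],![31,46,47,37,48,49,50,51],![52,53,54,55,24,56,57,27]]
def fk58 : List ℕ := [0,16120008,10141776,8141112,13246768,5300576,11508184,2512936,13263120,12573144,4235616,2496520,9437184,1753200,7731432,15481144,2578600,1622384,12425464,8585632,15563160,7846344,13819968,4792464,5816672,3029032,13828528,11860056,188496,8986752,14965048,8296776,9068832,3094696,1089872,15030712,4194352,14336064,15546808,12755008,6814152,4808880,12015784,4036824,10010960,1245600,5242896,16079256,2406520,11499688,663840,8446320,9609328,6560056,614528,15653224,12779920,4077576]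

theorem case_58 :
    ∃ M : Fin 8 → Fin 8 → EuclideanSpace ℂ (Fin 2 × Fin 2 × Fin 2),
      IsQLSIdx M ∧ FamCardEq (fun p : Fin 8 × Fin 8 => M p.1 p.2) 58 :=
  master1' fA58 fB58 58 fr58 (fun p => fg58 p.1 p.2) fk58
    (by decide +kernel) (by decide +kernel) (by decide +kernel) (by decide +kernel) (by decide +kernel) (by decide +kernel)

def fA59 : Fin 8 → Fin 8 → ZMod 8 := ![![0,0,0,0,0,0,0,0],![0,5,7,0,4,4,1,3],![0,4,5,3,6,1,2,7],![0,4,3,7,0,7,4,3],![0,1,7,4,4,0,5,3],![0,4,1,3,2,5,6,7],![0,0,3,7,4,3,4,7],![0,0,4,4,0,4,0,4]]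
def fB59 : Fin 8 → Fin 8 → ZMod 8 := ![![0,0,0,0,0,0,0,0],![0,1,5,6,4,5,1,2],![0,4,2,2,4,6,0,6],![0,0,1,5,4,1,4,5],![0,5,6,1,4,2,5,1],![0,7,4,1,0,4,3,5],![0,3,5,4,0,1,7,4],![0,4,1,5,0,5,4,1]]
def fr59 : Fin 59 → Fin 8 × Fin 8 := ![(0,0),(0,1),(0,2),(0,3),(0,4),(0,5),(0,6),(0,7),(1,0),(1,1),(1,2),(1,3),(1,4),(1,5),(1,6),(1,7),(2,0),(2,1),(2,2),(2,3),(2,4),(2,5),(2,6),(2,7),(3,0),(3,1),(3,2),(3,3),(3,4),(3,5),(3,6),(3,7),(4,0),(4,1),(4,2),(4,3),(4,4),(4,5),(4,6),(4,7),(5,0),(5,1),(5,2),(5,3),(5,4),(5,5),(5,6),(5,7),(6,0),(6,1),(6,2),(6,4),(6,5),(6,6),(7,1),(7,2),(7,4),(7,5),(7,6)]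
def fg59 : Fin 8 → Fin 8 → Fin 59 := ![![0,1,2,3,4,5,6,7],![8,9,10,11,12,13,14,15],![16,17,18,19,20,21,22,23],![24,25,26,27,28,29,30,31],![32,33,34,35,36,37,38,39],![40,41,42,43,44,45,46,47],![48,49,50,31,51,52,53,27],![31,54,55,26,56,57,58,50]]
def fk59 : List ℕ := [0,4640072,12797088,11586112,3490728,11404088,10258776,3312224,6701544,11046192,2425928,1477160,10158928,1065696,14862592,9751048,15263584,3089064,11250624,10035616,1943752,9889880,6647480,1794432,7573216,11946536,3326784,18720,8699976,1933784,15468088,8521984,7621064,12223760,3607656,295432,8981360,150208,15778080,8831528,16426592,4023208,12184256,9134240,1042888,8694104,7811000,598144,15847104,3410440,11567968,426088,10469880,7226904,12895304,4279712,12012200,2886200,1998936]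

theorem case_59 :
    ∃ M : Fin 8 → Fin 8 → EuclideanSpace ℂ (Fin 2 × Fin 2 × Fin 2),
      IsQLSIdx M ∧ FamCardEq (fun p : Fin 8 × Fin 8 => M p.1 p.2) 59 :=
  master1' fA59 fB59 59 fr59 (fun p => fg59 p.1 p.2) fk59
    (by decide +kernel) (by decide +kernel) (by decide +kernel) (by decide +kernel) (by decide +kernel) (by decide +kernel)

def fA60 : Fin 8 → Fin 8 → ZMod 8 := ![![0,0,0,0,0,0,0,0],![0,5,7,0,4,4,1,3],![0,4,5,3,6,1,2,7],![0,4,3,7,0,7,4,3],![0,1,7,4,4,0,5,3],![0,4,1,3,2,5,6,7],![0,0,3,7,4,3,4,7],![0,0,4,4,0,4,0,4]]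
def fB60 : Fin 8 → Fin 8 → ZMod 8 := ![![0,0,0,0,0,0,0,0],![0,1,3,4,6,5,7,2],![0,6,4,4,2,2,0,6],![0,7,4,0,3,7,4,3],![0,5,7,4,6,1,3,2],![0,3,4,0,7,3,4,7],![0,2,0,4,2,6,4,6],![0,4,0,0,4,4,0,4]]
def fr60 : Fin 60 → Fin 8 × Fin 8 := ![(0,0),(0,1),(0,2),(0,3),(0,4),(0,5),(0,6),(0,7),(1,0),(1,1),(1,2),(1,3),(1,4),(1,5),(1,6),(1,7),(2,0),(2,1),(2,2),(2,3),(2,4),(2,5),(2,6),(2,7),(3,0),(3,1),(3,2),(3,3),(3,4),(3,5),(3,6),(3,7),(4,0),(4,1),(4,2),(4,3),(4,4),(4,5),(4,6),(4,7),(5,0),(5,1),(5,2),(5,3),(5,4),(5,5),(5,6),(5,7),(6,1),(6,2),(6,4),(6,6),(7,0),(7,1),(7,2),(7,3),(7,4),(7,5),(7,6),(7,7)]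
def fg60 : Fin 8 → Fin 8 → Fin 60 := ![![0,1,2,3,4,5,6,7],![8,9,10,11,12,13,14,15],![16,17,18,19,20,21,22,23],![24,25,26,27,28,29,30,31],![32,33,34,35,36,37,38,39],![40,41,42,43,44,45,46,47],![31,48,49,29,50,27,51,24],![52,53,54,55,56,57,58,59]]
def fk60 : List ℕ := [0,6219976,12658992,7582008,5040616,15855896,13838352,8536096,6701544,10528944,2582744,14020832,11708816,5746880,3500536,14942664,15263584,2575912,11112016,5772888,3493640,14308984,12291952,6989632,7573216,11429800,3188688,12795864,12347016,4292600,2270960,15847104,7621064,11706512,3498232,13105344,10527152,4569312,2580952,16124392,16426592,3477288,12308304,4872024,2559496,13113208,11128432,7923264,2893704,11724784,4073128,10544848,8521984,14475720,4399152,15841336,13557992,7600152,5316880,18720]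

theorem case_60 :
    ∃ M : Fin 8 → Fin 8 → EuclideanSpace ℂ (Fin 2 × Fin 2 × Fin 2),
      IsQLSIdx M ∧ FamCardEq (fun p : Fin 8 × Fin 8 => M p.1 p.2) 60 :=
  master1' fA60 fB60 60 fr60 (fun p => fg60 p.1 p.2) fk60
    (by decide +kernel) (by decide +kernel) (by decide +kernel) (by decide +kernel) (by decide +kernel) (by decide +kernel)

def fA61 : Fin 8 → Fin 8 → ZMod 8 := ![![0,0,0,0,0,0,0,0],![0,6,4,3,5,2,7,1],![0,4,3,7,7,3,2,6],![0,0,5,7,3,1,4,4],![0,4,7,2,6,7,3,3],![0,2,4,3,1,6,7,5],![0,4,0,6,2,4,6,2],![0,0,1,4,4,5,3,7]]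
def fB61 : Fin 8 → Fin 8 → ZMod 8 := ![![0,0,0,0,0,0,0,0],![7,1,4,0,2,6,3,5],![2,6,3,0,3,4,7,7],![4,4,5,0,1,0,7,3],![3,3,7,0,7,4,2,6],![7,5,4,0,6,2,3,1],![6,2,0,0,4,4,6,2],![3,7,1,0,5,0,4,4]]
def fr61 : Fin 61 → Fin 8 × Fin 8 := ![(0,0),(0,1),(0,2),(0,3),(0,4),(0,5),(0,6),(0,7),(1,0),(1,1),(1,2),(1,3),(1,4),(1,5),(1,6),(1,7),(2,0),(2,1),(2,2),(2,3),(2,4),(2,5),(2,6),(2,7),(3,0),(3,1),(3,2),(3,3),(3,4),(3,5),(3,6),(3,7),(4,0),(4,1),(4,2),(4,3),(4,4),(4,5),(4,6),(4,7),(5,0),(5,2),(5,3),(5,4),(5,6),(5,7),(6,0),(6,1),(6,2),(6,3),(6,4),(6,5),(6,6),(6,7),(7,1),(7,2),(7,3),(7,4),(7,5),(7,6),(7,7)]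
def fg61 : Fin 8 → Fin 8 → Fin 61 := ![![0,1,2,3,4,5,6,7],![8,9,10,11,12,13,14,15],![16,17,18,19,20,21,22,23],![24,25,26,27,28,29,30,31],![32,33,34,35,36,37,38,39],![40,13,41,42,43,9,44,45],![46,47,48,49,50,51,52,53],![38,54,55,56,57,58,59,60]]
def fk61 : List ℕ := [0,13874000,11869280,15620160,8178432,5370736,8610976,2534304,4020016,15501376,13787984,733040,10063920,7260256,12336016,4452496,13237984,10035248,8293120,12044064,2505184,1794064,4772672,15472704,9486144,4219024,2476960,8292224,15562816,12722352,1283040,12015840,7333344,4134704,61440,5880864,13119200,12408592,15648832,9572160,12523280,5251952,9006928,1822736,4094896,12693680,5909536,647024,15677504,2389088,11986720,9150288,14221440,8177536,12483472,8639648,14192768,4916032,3947440,7187680,1139680]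

theorem case_61 :
    ∃ M : Fin 8 → Fin 8 → EuclideanSpace ℂ (Fin 2 × Fin 2 × Fin 2),
      IsQLSIdx M ∧ FamCardEq (fun p : Fin 8 × Fin 8 => M p.1 p.2) 61 :=
  master1' fA61 fB61 61 fr61 (fun p => fg61 p.1 p.2) fk61
    (by decide +kernel) (by decide +kernel) (by decide +kernel) (by decide +kernel) (by decide +kernel) (by decide +kernel)

def fA62 : Fin 8 → Fin 8 → ZMod 8 := ![![0,0,0,0,0,0,0,0],![0,5,3,6,1,4,2,7],![0,4,0,4,2,6,6,2],![0,0,2,2,4,4,6,6],![0,0,4,4,0,0,4,4],![0,4,6,2,4,0,2,6],![0,4,4,0,6,2,6,2],![0,1,7,6,5,4,2,3]]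
def fB62 : Fin 8 → Fin 8 → ZMod 8 := ![![0,0,0,0,0,0,0,0],![0,4,4,5,0,1,7,3],![0,6,7,3,7,4,3,2],![0,0,4,1,4,5,7,3],![0,2,7,4,3,3,6,7],![0,4,0,0,4,0,4,4],![0,6,3,4,3,7,2,7],![0,2,3,7,7,4,3,6]]
def fr62 : Fin 62 → Fin 8 × Fin 8 := ![(0,0),(0,1),(0,2),(0,3),(0,4),(0,5),(0,6),(0,7),(1,0),(1,1),(1,2),(1,3),(1,4),(1,5),(1,6),(1,7),(2,0),(2,1),(2,2),(2,3),(2,4),(2,5),(2,6),(2,7),(3,0),(3,1),(3,2),(3,3),(3,4),(3,5),(3,6),(3,7),(4,0),(4,1),(4,2),(4,3),(4,4),(4,5),(4,6),(4,7),(5,0),(5,1),(5,2),(5,3),(5,5),(5,7),(6,0),(6,1),(6,2),(6,3),(6,4),(6,5),(6,6),(6,7),(7,0),(7,1),(7,2),(7,3),(7,4),(7,5),(7,6),(7,7)]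
def fg62 : Fin 8 → Fin 8 → Fin 62 := ![![0,1,2,3,4,5,6,7],![8,9,10,11,12,13,14,15],![16,17,18,19,20,21,22,23],![24,25,26,27,28,29,30,31],![32,33,34,35,36,37,38,39],![40,41,42,43,30,44,28,45],![46,47,48,49,50,51,52,53],![54,55,56,57,58,59,60,61]]
def fk62 : List ℕ := [0,8162080,5142512,8307456,16366032,9453600,15448304,13532880,15342824,4626376,3408536,4513768,12829880,8019144,13747608,11799480,5974048,12034816,8724432,11922208,3199472,13330432,2281680,333552,14304384,3592096,277104,3442560,11795536,4850848,10616176,8663888,9439488,15499808,14581488,15649280,6926544,18720,8106480,6191056,13125024,2412160,1456976,2524832,5768576,9843312,5857568,11921920,8869584,12034592,3315952,13181184,2136528,483312,6970824,13031144,11813816,12885704,4425112,16391656,5342392,3426968]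

theorem case_62 :
    ∃ M : Fin 8 → Fin 8 → EuclideanSpace ℂ (Fin 2 × Fin 2 × Fin 2),
      IsQLSIdx M ∧ FamCardEq (fun p : Fin 8 × Fin 8 => M p.1 p.2) 62 :=
  master1' fA62 fB62 62 fr62 (fun p => fg62 p.1 p.2) fk62
    (by decide +kernel) (by decide +kernel) (by decide +kernel) (by decide +kernel) (by decide +kernel) (by decide +kernel)

def fA63 : Fin 8 → Fin 8 → ZMod 8 := ![![0,0,0,0,0,0,0,0],![0,2,6,2,6,1,5,4],![0,5,4,4,0,7,1,3],![0,1,2,6,6,4,2,5],![0,4,1,5,4,0,4,0],![0,6,1,1,2,5,5,4],![0,5,5,1,4,3,1,7],![0,1,5,5,2,4,6,1]]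
def fB63 : Fin 8 → Fin 8 → ZMod 8 := ![![0,0,0,0,0,0,0,0],![0,7,5,1,4,3,3,7],![0,7,3,4,6,7,2,3],![0,2,4,3,2,6,7,6],![0,3,0,0,4,7,4,4],![0,4,1,5,0,4,3,7],![0,6,7,4,2,2,6,3],![0,3,4,7,6,3,7,2]]
def fr63 : Fin 63 → Fin 8 × Fin 8 := ![(0,0),(0,1),(0,2),(0,3),(0,4),(0,5),(0,6),(0,7),(1,0),(1,1),(1,2),(1,3),(1,4),(1,5),(1,6),(1,7),(2,0),(2,1),(2,2),(2,3),(2,4),(2,5),(2,6),(2,7),(3,0),(3,1),(3,2),(3,3),(3,4),(3,5),(3,6),(3,7),(4,0),(4,1),(4,2),(4,3),(4,4),(4,5),(4,6),(4,7),(5,0),(5,1),(5,2),(5,3),(5,4),(5,5),(5,6),(5,7),(6,0),(6,1),(6,2),(6,3),(6,4),(6,5),(6,6),(6,7),(7,0),(7,1),(7,2),(7,3),(7,4),(7,6),(7,7)]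
def fg63 : Fin 8 → Fin 8 → Fin 63 := ![![0,1,2,3,4,5,6,7],![8,9,10,11,12,13,14,15],![16,17,18,19,20,21,22,23],![24,25,26,27,28,29,30,31],![32,33,34,35,36,37,38,39],![40,41,42,43,44,45,46,47],![48,49,50,51,52,53,54,55],![56,57,58,59,60,12,61,62]]
def fk63 : List ℕ := [0,15582072,7071992,14624528,9682968,15600224,7940592,6156056,9758096,6432456,16534600,5474976,271784,6483952,15568192,13779624,6785320,5327456,13591008,2272824,16206080,5342024,14459096,10577408,11168904,9940928,1164608,6620056,3779744,9725672,197752,15190944,1067616,16616856,8102680,13590896,8620664,16663680,6906384,5089656,9871984,6317480,16649000,5359936,418376,6335632,15714848,13631816,15057768,13829280,5057056,10545272,7668544,13880712,6220568,2302016,3812168,519296,8487424,16072792,11135840,9651000,7833696]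

theorem case_63 :
    ∃ M : Fin 8 → Fin 8 → EuclideanSpace ℂ (Fin 2 × Fin 2 × Fin 2),
      IsQLSIdx M ∧ FamCardEq (fun p : Fin 8 × Fin 8 => M p.1 p.2) 63 :=
  master1' fA63 fB63 63 fr63 (fun p => fg63 p.1 p.2) fk63
    (by decide +kernel) (by decide +kernel) (by decide +kernel) (by decide +kernel) (by decide +kernel) (by decide +kernel)

def fA64 : Fin 8 → Fin 8 → ZMod 8 := ![![0,0,0,0,0,0,0,0],![0,1,3,5,7,1,4,5],![0,2,5,1,5,6,4,1],![0,5,4,1,4,1,0,5],![0,4,2,5,6,4,0,1],![0,6,7,6,3,2,4,2],![0,5,1,2,1,5,4,6],![0,1,6,4,2,5,0,4]]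
def fB64 : Fin 8 → Fin 8 → ZMod 8 := ![![0,0,0,0,0,0,0,0],![0,4,4,5,0,1,7,3],![0,6,7,3,7,4,3,2],![0,0,4,1,4,5,7,3],![0,2,7,4,3,3,6,7],![0,4,0,0,4,0,4,4],![0,6,3,4,3,7,2,7],![0,2,3,7,7,4,3,6]]
def fr64 : Fin 64 → Fin 8 × Fin 8 := ![(0,0),(0,1),(0,2),(0,3),(0,4),(0,5),(0,6),(0,7),(1,0),(1,1),(1,2),(1,3),(1,4),(1,5),(1,6),(1,7),(2,0),(2,1),(2,2),(2,3),(2,4),(2,5),(2,6),(2,7),(3,0),(3,1),(3,2),(3,3),(3,4),(3,5),(3,6),(3,7),(4,0),(4,1),(4,2),(4,3),(4,4),(4,5),(4,6),(4,7),(5,0),(5,1),(5,2),(5,3),(5,4),(5,5),(5,6),(5,7),(6,0),(6,1),(6,2),(6,3),(6,4),(6,5),(6,6),(6,7),(7,0),(7,1),(7,2),(7,3),(7,4),(7,5),(7,6),(7,7)]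
def fg64 : Fin 8 → Fin 8 → Fin 64 := ![![0,1,2,3,4,5,6,7],![8,9,10,11,12,13,14,15],![16,17,18,19,20,21,22,23],![24,25,26,27,28,29,30,31],![32,33,34,35,36,37,38,39],![40,41,42,43,44,45,46,47],![48,49,50,51,52,53,54,55],![56,57,58,59,60,61,62,63]]
def fk64 : List ℕ := [0,8162080,5142512,8307456,16366032,9453600,15448304,13532880,11598536,882152,16703672,998856,9052824,2145000,9970616,8317336,3363664,9428080,8210688,9278544,559904,10687344,1739264,16597024,10535720,1920008,15644888,2032680,10124024,3179272,8944600,7254520,2255520,10413440,7098448,10268064,1806960,11676288,627536,15489392,5324272,11384528,10429344,11534064,2811264,12680656,3728544,2042496,13800552,3088200,1870360,2971496,11029560,4379720,12209432,10257208,8563080,16720552,13410168,16607880,7885144,1239464,6967416,5019224]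

theorem case_64 :
    ∃ M : Fin 8 → Fin 8 → EuclideanSpace ℂ (Fin 2 × Fin 2 × Fin 2),
      IsQLSIdx M ∧ FamCardEq (fun p : Fin 8 × Fin 8 => M p.1 p.2) 64 :=
  master1' fA64 fB64 64 fr64 (fun p => fg64 p.1 p.2) fk64
    (by decide +kernel) (by decide +kernel) (by decide +kernel) (by decide +kernel) (by decide +kernel) (by decide +kernel)

end QLS8

/-- For every integer `c` with `8 ≤ c ≤ 64` and `c ≠ 9`, there is a quantum
Latin square of order 8 in `ℋ₂ ⊗ ℋ₂ ⊗ ℋ₂` with cardinality exactly `c`. -/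
theorem exists_qls8_all_cardinalities (c : ℕ) (h8 : 8 ≤ c) (h64 : c ≤ 64) (h9 : c ≠ 9) :
    ∃ M : Fin 8 → Fin 8 → EuclideanSpace ℂ (Fin 2 × Fin 2 × Fin 2),
      IsQLSIdx M ∧ FamCardEq (fun p : Fin 8 × Fin 8 => M p.1 p.2) c := by
  interval_cases c
  · exact QLS8.case_8
  · exact absurd rfl h9
  · exact QLS8.case_10
  · exact QLS8.case_11
  · exact QLS8.case_12
  · exact QLS8.case_13
  · exact QLS8.case_14
  · exact QLS8.case_15
  · exact QLS8.case_16
  · exact QLS8.case_17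
  · exact QLS8.case_18
  · exact QLS8.case_19
  · exact QLS8.case_20
  · exact QLS8.case_21
  · exact QLS8.case_22
  · exact QLS8.case_23
  · exact QLS8.case_24
  · exact QLS8.case_25
  · exact QLS8.case_26
  · exact QLS8.case_27
  · exact QLS8.case_28
  · exact QLS8.case_29
  · exact QLS8.case_30
  · exact QLS8.case_31
  · exact QLS8.case_32
  · exact QLS8.case_33
  · exact QLS8.case_34
  · exact QLS8.case_35
  · exact QLS8.case_36
  · exact QLS8.case_37
  · exact QLS8.case_38
  · exact QLS8.case_39
  · exact QLS8.case_40
  · exact QLS8.case_41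
  · exact QLS8.case_42
  · exact QLS8.case_43
  · exact QLS8.case_44
  · exact QLS8.case_45
  · exact QLS8.case_46
  · exact QLS8.case_47
  · exact QLS8.case_48
  · exact QLS8.case_49
  · exact QLS8.case_50
  · exact QLS8.case_51
  · exact QLS8.case_52
  · exact QLS8.case_53
  · exact QLS8.case_54
  · exact QLS8.case_55
  · exact QLS8.case_56
  · exact QLS8.case_57
  · exact QLS8.case_58
  · exact QLS8.case_59
  · exact QLS8.case_60
  · exact QLS8.case_61
  · exact QLS8.case_62
  · exact QLS8.case_63
  · exact QLS8.case_64
end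
end

section
/- There is no genuinely quantum Latin square of order 2 or of order 3; that is, every QLS(2) has cardinality exactly 2 and every QLS(3) has cardinality exactly 3. -/
noncomputable section

/-- The `n`-dimensional complex Hilbert space `ℋ_n`. -/
abbrev Hs (n : ℕ) := EuclideanSpace ℂ (Fin n)

/-- A quantum Latin square of order `n`: each row and each column is an
orthonormal family of `n` vectors in `ℋ_n`, hence an orthonormal basis. -/
def IsQLS {n : ℕ} (M : Fin n → Fin n → Hs n) : Prop :=
  (∀ i, Orthonormal ℂ (fun j => M i j)) ∧ (∀ j, Orthonormal ℂ (fun i => M i j))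

/-- The cardinality of a quantum Latin square is `c`. -/
def CardEq {n : ℕ} (M : Fin n → Fin n → Hs n) (c : ℕ) : Prop :=
  FamCardEq (fun p : Fin n × Fin n => M p.1 p.2) c

open scoped InnerProductSpace

/-!
Take row `0` of the square as reference basis `b` and another row as basis `v`; column
orthonormality gives `⟪b m, v m⟫ = 0` for every `m`. In dimension 2 this already makes `v j` a
phase multiple of the other vector of `b`. In dimension 3, expanding `⟪b k, b l⟫ = 0` for
`k, l ≠ j` in the basis `v` leaves only the term `⟪b k, v j⟫ ⟪v j, b l⟫`, so `v j` is orthogonal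
to two vectors of `b` and hence a phase multiple of the third. Thus every entry is, up to phase,
an entry of row `0`, whose entries are mutually orthogonal and so pairwise inequivalent.
-/

section PhaseEq

variable {E : Type*}

theorem PhaseEq.refl [AddCommGroup E] [Module ℂ E] (u : E) : PhaseEq u u :=
  ⟨0, by simp⟩

variable [NormedAddCommGroup E] [InnerProductSpace ℂ E]

theorem not_phaseEq_of_inner_eq_zero {u v : E} (hu : u ≠ 0) (huv : ⟪u, v⟫_ℂ = 0) :
    ¬ PhaseEq u v := by
  rintro ⟨θ, rfl⟩
  rw [inner_smul_left, mul_eq_zero, inner_self_eq_zero] at huv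
  rcases huv with h | rfl
  · simp at h
  · exact hu (smul_zero _)

theorem phaseEq_of_inner_eq_zero {ι : Type*} [Fintype ι] (b : OrthonormalBasis ι ℂ E) {v : E}
    (hv : ‖v‖ = 1) {k₀ : ι} (h : ∀ k, k ≠ k₀ → ⟪b k, v⟫_ℂ = 0) : PhaseEq v (b k₀) := by
  set c := ⟪b k₀, v⟫_ℂ
  have hvc : v = c • b k₀ := by
    classical
    conv_lhs => rw [← b.sum_repr' v]
    exact Finset.sum_eq_single k₀ (fun k _ hk => by rw [h k hk, zero_smul])
      (fun hk => absurd (Finset.mem_univ k₀) hk)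
  have hc : ‖c‖ = 1 := by
    rw [← hv, hvc, norm_smul, b.orthonormal.1 k₀, mul_one]
  refine ⟨c.arg, ?_⟩
  rw [← one_mul (Complex.exp _), ← Complex.ofReal_one, ← hc, Complex.norm_mul_exp_arg_mul_I]
  exact hvc

end PhaseEq

section SmallDimension

variable {E : Type*} [NormedAddCommGroup E] [InnerProductSpace ℂ E]

theorem phaseEq_rev_of_inner_eq_zero (b : OrthonormalBasis (Fin 2) ℂ E) {v : E} (hv : ‖v‖ = 1)
    {j : Fin 2} (h : ⟪b j, v⟫_ℂ = 0) : PhaseEq v (b j.rev) :=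
  phaseEq_of_inner_eq_zero b hv fun k hk => by
    have hfin : ∀ j k : Fin 2, k ≠ j.rev → k = j := by decide
    rwa [hfin j k hk]

theorem exists_phaseEq_of_inner_eq_zero_of_ne (b : OrthonormalBasis (Fin 3) ℂ E) {v : E}
    (hv : ‖v‖ = 1) {k l : Fin 3} (hkl : k ≠ l) (hk : ⟪b k, v⟫_ℂ = 0) (hl : ⟪b l, v⟫_ℂ = 0) :
    ∃ m, PhaseEq v (b m) := by
  have hfin : ∀ k l : Fin 3, k ≠ l → ∃ m : Fin 3, ∀ i, i ≠ m → i = k ∨ i = l := by decide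
  obtain ⟨m, hm⟩ := hfin k l hkl
  refine ⟨m, phaseEq_of_inner_eq_zero b hv fun i hi => ?_⟩
  rcases hm i hi with rfl | rfl
  exacts [hk, hl]

theorem exists_ne_inner_eq_zero_of_inner_diag_eq_zero (v : OrthonormalBasis (Fin 3) ℂ E)
    {b : Fin 3 → E} (hb : Pairwise fun k l => ⟪b k, b l⟫_ℂ = 0) (h : ∀ m, ⟪b m, v m⟫_ℂ = 0)
    (j : Fin 3) : ∃ k, k ≠ j ∧ ⟪b k, v j⟫_ℂ = 0 := by
  have hne : ∀ j : Fin 3, j + 1 ≠ j ∧ j + 2 ≠ j ∧ j + 1 ≠ j + 2 := by decide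
  have hfin : ∀ j m : Fin 3, m ≠ j → m = j + 1 ∨ m = j + 2 := by decide
  have hsum : ⟪b (j + 1), v j⟫_ℂ * ⟪v j, b (j + 2)⟫_ℂ = 0 := by
    rw [← hb (hne j).2.2, ← v.sum_inner_mul_inner (b (j + 1)) (b (j + 2)),
      Finset.sum_eq_single j]
    · intro m _ hm
      obtain rfl | rfl := hfin j m hm
      · rw [h, zero_mul]
      · rw [inner_eq_zero_symm.1 (h _), mul_zero]
    · exact fun hj => absurd (Finset.mem_univ j) hj
  rcases mul_eq_zero.1 hsum with h₁ | h₂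
  · exact ⟨j + 1, (hne j).1, h₁⟩
  · exact ⟨j + 2, (hne j).2.1, inner_eq_zero_symm.1 h₂⟩

end SmallDimension

namespace IsQLS

variable {n : ℕ} {M : Fin n → Fin n → Hs n}

def rowBasis (hM : IsQLS M) (i : Fin n) : OrthonormalBasis (Fin n) ℂ (Hs n) :=
  OrthonormalBasis.mk (hM.1 i)
    ((hM.1 i).linearIndependent.span_eq_top_of_card_eq_finrank' (by simp)).ge

@[simp]
theorem coe_rowBasis (hM : IsQLS M) (i : Fin n) : ⇑(hM.rowBasis i) = M i :=
  OrthonormalBasis.coe_mk _ _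

theorem cardEq_of_forall_phaseEq_row (hM : IsQLS M) (i₀ : Fin n)
    (h : ∀ i j, ∃ k, PhaseEq (M i j) (M i₀ k)) : CardEq M n :=
  ⟨M i₀, fun p => h p.1 p.2, fun k => ⟨(i₀, k), .refl _⟩,
    fun _ _ hkl => not_phaseEq_of_inner_eq_zero ((hM.1 i₀).ne_zero _) ((hM.1 i₀).2 hkl)⟩

theorem cardEq_of_forall_orthonormalBasis [NeZero n] (hM : IsQLS M)
    (H : ∀ b v : OrthonormalBasis (Fin n) ℂ (Hs n), (∀ m, ⟪b m, v m⟫_ℂ = 0) →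
      ∀ j, ∃ k, PhaseEq (v j) (b k)) :
    CardEq M n := by
  refine hM.cardEq_of_forall_phaseEq_row 0 fun i j => ?_
  by_cases hi : i = 0
  · exact hi ▸ ⟨j, .refl _⟩
  · have hdiag : ∀ m, ⟪M 0 m, M i m⟫_ℂ = 0 := fun m => (hM.2 m).2 (Ne.symm hi)
    simpa using H (hM.rowBasis 0) (hM.rowBasis i) (by simpa using hdiag) j

theorem cardEq_two {M : Fin 2 → Fin 2 → Hs 2} (hM : IsQLS M) : CardEq M 2 :=
  hM.cardEq_of_forall_orthonormalBasis fun b v h j =>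
    ⟨j.rev, phaseEq_rev_of_inner_eq_zero b (v.orthonormal.1 j) (h j)⟩

theorem cardEq_three {M : Fin 3 → Fin 3 → Hs 3} (hM : IsQLS M) : CardEq M 3 :=
  hM.cardEq_of_forall_orthonormalBasis fun b v h j => by
    obtain ⟨k, hkj, hk⟩ := exists_ne_inner_eq_zero_of_inner_diag_eq_zero v b.orthonormal.2 h j
    exact exists_phaseEq_of_inner_eq_zero_of_ne b (v.orthonormal.1 j) hkj hk (h j)

end IsQLS

/-- There is no genuinely quantum Latin square of order 2 or 3: every QLS(2)
has cardinality exactly 2 and every QLS(3) has cardinality exactly 3. -/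
theorem qls2_qls3_apparently_quantum :
    (∀ M : Fin 2 → Fin 2 → Hs 2, IsQLS M → CardEq M 2) ∧
    (∀ M : Fin 3 → Fin 3 → Hs 3, IsQLS M → CardEq M 3) :=
  ⟨fun _ => IsQLS.cardEq_two, fun _ => IsQLS.cardEq_three⟩
end
end
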